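/- arXiv:math-ph/9806012 — 4 statements merged into one kernel-verified Lean document; each statement's English description precedes it below -/
import Mathlib

section
/- Let U ∈ L¹(ℝ) with U ≥ 0 and U not equal to 0 almost everywhere. Then the largest eigenvalue of 𝓛_μ is strictly decreasing in μ: for all 0 ≤ μ₂ < μ₁, λ₁(𝓛_{μ₁}) < λ₁(𝓛_{μ₂}). -/
open MeasureTheory Real

/-- The kernel `𝓛_μ(x,y) = √(U x) e^{-μ|x-y|} √(U y)`. -/
noncomputable def Lker (U : ℝ → ℝ) (μ : ℝ) (x y : ℝ) : ℝ :=
  Real.sqrt (U x) * Real.exp (-μ * |x - y|) * Real.sqrt (U y)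

/-- The largest eigenvalue of the integral operator `𝓛_μ` on `L²(ℝ)`:
`λ₁(𝓛_μ) = sup { ⟨f, 𝓛_μ f⟩ : ‖f‖_{L²} = 1 }`. -/
noncomputable def lam1 (U : ℝ → ℝ) (μ : ℝ) : ℝ :=
  sSup { r : ℝ | ∃ f : ℝ → ℝ, MemLp f 2 volume ∧ (∫ x, (f x) ^ 2) = 1 ∧
    r = ∫ x, ∫ y, f x * Lker U μ x y * f y }

namespace Lam1Aux

open Metric

/-- The set whose supremum is `lam1`. -/
def SS (U : ℝ → ℝ) (μ : ℝ) : Set ℝ :=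
  { r : ℝ | ∃ f : ℝ → ℝ, MemLp f 2 volume ∧ (∫ x, (f x) ^ 2) = 1 ∧
    r = ∫ x, ∫ y, f x * Lker U μ x y * f y }

lemma lam1_eq (U : ℝ → ℝ) (μ : ℝ) : lam1 U μ = sSup (SS U μ) := rfl

/-- Inner convolution-type integral. -/
noncomputable def K (g : ℝ → ℝ) (μ : ℝ) (x : ℝ) : ℝ :=
  ∫ y, Real.exp (-μ * |x - y|) * g y

/-- The quadratic form in factored form. -/
noncomputable def EE (μ : ℝ) (g₁ g₂ : ℝ → ℝ) : ℝ :=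
  ∫ x, g₁ x * K g₂ μ x

variable {U f g g₁ g₂ : ℝ → ℝ} {μ x : ℝ}

lemma expk_le_one (hμ : 0 ≤ μ) (x y : ℝ) : Real.exp (-μ * |x - y|) ≤ 1 := by
  rw [Real.exp_le_one_iff]
  have := abs_nonneg (x - y)
  nlinarith

lemma sU_aesm (hU : Integrable U) :
    AEStronglyMeasurable (fun x => Real.sqrt (U x)) volume :=
  Real.continuous_sqrt.comp_aestronglyMeasurable hU.1

lemma sU_mem (hU : Integrable U) (hU0 : ∀ x, 0 ≤ U x) :
    MemLp (fun x => Real.sqrt (U x)) 2 volume :=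
  (memLp_two_iff_integrable_sq (sU_aesm hU)).2
    (hU.congr (Filter.Eventually.of_forall fun x => (Real.sq_sqrt (hU0 x)).symm))

lemma mul_int (hf : MemLp f 2 volume) (hg : MemLp g 2 volume) :
    Integrable (fun x => f x * g x) := by
  refine Integrable.mono' (g := fun x => (f x ^ 2 + g x ^ 2)/2)
    ((hf.integrable_sq.add hg.integrable_sq).div_const 2)
    (hf.1.mul hg.1) (Filter.Eventually.of_forall fun x => ?_)
  have h := sq_nonneg (|f x| - |g x|)
  rw [Real.norm_eq_abs, abs_mul]
  nlinarith [sq_abs (f x), sq_abs (g x)]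

/-- Cauchy–Schwarz for integrals (nonneg functions). -/
lemma holder (ν : Measure ℝ) (hf : MemLp f 2 ν) (hg : MemLp g 2 ν)
    (hf0 : ∀ x, 0 ≤ f x) (hg0 : ∀ x, 0 ≤ g x) :
    ∫ x, f x * g x ∂ν ≤ Real.sqrt (∫ x, f x ^ 2 ∂ν) * Real.sqrt (∫ x, g x ^ 2 ∂ν) := by
  have hpq : Real.HolderConjugate 2 2 := Real.HolderConjugate.two_two
  have h2 : ENNReal.ofReal (2:ℝ) = 2 := by norm_num
  have := integral_mul_le_Lp_mul_Lq_of_nonneg (μ := ν) hpq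
    (Filter.Eventually.of_forall hf0) (Filter.Eventually.of_forall hg0)
    (h2 ▸ hf) (h2 ▸ hg)
  calc ∫ x, f x * g x ∂ν
      ≤ (∫ x, f x ^ (2:ℝ) ∂ν) ^ (1/2 : ℝ) * (∫ x, g x ^ (2:ℝ) ∂ν) ^ (1/2 : ℝ) := this
    _ = Real.sqrt (∫ x, f x ^ 2 ∂ν) * Real.sqrt (∫ x, g x ^ 2 ∂ν) := by
        rw [Real.sqrt_eq_rpow, Real.sqrt_eq_rpow]
        norm_num [Real.rpow_natCast]

lemma K_int (hg : Integrable g) (hμ : 0 ≤ μ) (x : ℝ) :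
    Integrable (fun y => Real.exp (-μ * |x - y|) * g y) := by
  refine hg.bdd_mul (c := 1) ?_ (Filter.Eventually.of_forall fun y => ?_)
  · exact (Real.continuous_exp.comp (by fun_prop)).aestronglyMeasurable
  · rw [Real.norm_eq_abs, abs_of_pos (Real.exp_pos _)]
    exact expk_le_one hμ x y

lemma K_abs_le (hg : Integrable g) (hμ : 0 ≤ μ) (x : ℝ) :
    |K g μ x| ≤ ∫ y, |g y| := by
  rw [K, ← Real.norm_eq_abs]
  refine (norm_integral_le_integral_norm _).trans ?_
  refine integral_mono (K_int hg hμ x).norm hg.abs fun y => ?_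
  rw [Real.norm_eq_abs, abs_mul, abs_of_pos (Real.exp_pos _)]
  exact mul_le_of_le_one_left (abs_nonneg _) (expk_le_one hμ x y)

lemma K_nonneg (hg0 : ∀ y, 0 ≤ g y) (μ : ℝ) (x : ℝ) : 0 ≤ K g μ x :=
  integral_nonneg fun y => mul_nonneg (Real.exp_pos _).le (hg0 y)

lemma K_abs_le' (hg : Integrable g) (hμ : 0 ≤ μ) (x : ℝ) :
    |K g μ x| ≤ K (fun y => |g y|) μ x := by
  rw [K, ← Real.norm_eq_abs]
  refine (norm_integral_le_integral_norm _).trans (le_of_eq (integral_congr_ae ?_))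
  exact Filter.Eventually.of_forall fun y => by
    simp only [Real.norm_eq_abs, abs_mul, abs_of_pos (Real.exp_pos _)]

lemma K_aesm (hg : Integrable g) (μ : ℝ) : AEStronglyMeasurable (K g μ) volume := by
  apply AEStronglyMeasurable.integral_prod_right'
    (f := fun p : ℝ × ℝ => Real.exp (-μ * |p.1 - p.2|) * g p.2)
  exact (Real.continuous_exp.comp (by fun_prop)).aestronglyMeasurable.mul
    (hg.1.comp_quasiMeasurePreserving MeasureTheory.Measure.quasiMeasurePreserving_snd)

lemma outer_int (hg₁ : Integrable g₁) (hg₂ : Integrable g₂) (hμ : 0 ≤ μ) :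
    Integrable (fun x => g₁ x * K g₂ μ x) := by
  refine Integrable.mono' (hg₁.abs.mul_const (∫ y, |g₂ y|))
    (hg₁.1.mul (K_aesm hg₂ μ)) (Filter.Eventually.of_forall fun x => ?_)
  rw [Real.norm_eq_abs, abs_mul]
  exact mul_le_mul_of_nonneg_left (K_abs_le hg₂ hμ x) (abs_nonneg _)

/-- Rewriting the double integral in factored form. -/
lemma Q_eq (U f : ℝ → ℝ) (μ : ℝ) :
    (∫ x, ∫ y, f x * Lker U μ x y * f y)
      = EE μ (fun x => Real.sqrt (U x) * f x) (fun y => Real.sqrt (U y) * f y) := by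
  unfold EE K
  congr 1
  funext x
  rw [← integral_const_mul]
  congr 1
  funext y
  simp only [Lker]
  ring

/-- The nonnegative profile `√U · |f|`. -/
noncomputable def hh (U f : ℝ → ℝ) : ℝ → ℝ := fun x => Real.sqrt (U x) * |f x|

lemma hh_nonneg (U f : ℝ → ℝ) (x : ℝ) : 0 ≤ hh U f x :=
  mul_nonneg (Real.sqrt_nonneg _) (abs_nonneg _)

lemma abs_memℒp (hf : MemLp f 2 volume) : MemLp (fun x => |f x|) 2 volume := hf.abs

lemma hh_int (hU : Integrable U) (hU0 : ∀ x, 0 ≤ U x) (hf : MemLp f 2 volume) :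
    Integrable (hh U f) :=
  mul_int (sU_mem hU hU0) (abs_memℒp hf)

lemma hh_setIntegral_le (hU : Integrable U) (hU0 : ∀ x, 0 ≤ U x)
    (hf : MemLp f 2 volume) (h1 : (∫ x, (f x) ^ 2) = 1) (s : Set ℝ) :
    ∫ x in s, hh U f x ≤ Real.sqrt (∫ x in s, U x) := by
  have h := holder (volume.restrict s) ((sU_mem hU hU0).restrict s)
    ((abs_memℒp hf).restrict s) (fun x => Real.sqrt_nonneg _) (fun x => abs_nonneg _)
  have e1 : (∫ x in s, Real.sqrt (U x) ^ 2) = ∫ x in s, U x :=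
    integral_congr_ae (Filter.Eventually.of_forall fun x => Real.sq_sqrt (hU0 x))
  have e2 : (∫ x in s, |f x| ^ 2) ≤ 1 := by
    have : (∫ x in s, |f x| ^ 2) = ∫ x in s, f x ^ 2 :=
      integral_congr_ae (Filter.Eventually.of_forall fun x => sq_abs (f x))
    rw [this, ← h1]
    exact setIntegral_le_integral hf.integrable_sq
      (Filter.Eventually.of_forall fun x => sq_nonneg _)
  calc ∫ x in s, hh U f x
      ≤ Real.sqrt (∫ x in s, Real.sqrt (U x) ^ 2) * Real.sqrt (∫ x in s, |f x| ^ 2) := h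
    _ ≤ Real.sqrt (∫ x in s, U x) * 1 := by
        rw [e1]
        exact mul_le_mul_of_nonneg_left (Real.sqrt_le_one.2 e2) (Real.sqrt_nonneg _)
    _ = Real.sqrt (∫ x in s, U x) := mul_one _

lemma hh_integral_le (hU : Integrable U) (hU0 : ∀ x, 0 ≤ U x)
    (hf : MemLp f 2 volume) (h1 : (∫ x, (f x) ^ 2) = 1) :
    ∫ x, hh U f x ≤ Real.sqrt (∫ x, U x) := by
  have := hh_setIntegral_le hU hU0 hf h1 Set.univ
  simpa [setIntegral_univ] using this

lemma U_exp_int (hU : Integrable U) (hμ : 0 ≤ μ) :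
    Integrable (fun x => Real.exp (-μ * |x|) * U x) := by
  refine hU.bdd_mul (c := 1) ?_ (Filter.Eventually.of_forall fun x => ?_)
  · exact (Real.continuous_exp.comp (by fun_prop)).aestronglyMeasurable
  · rw [Real.norm_eq_abs, abs_of_pos (Real.exp_pos _)]
    rw [Real.exp_le_one_iff]
    have := abs_nonneg x
    nlinarith

lemma B_pos (hU : Integrable U) (hU0 : ∀ x, 0 ≤ U x)
    (hUne : ¬ (U =ᵐ[volume] (0 : ℝ → ℝ))) (hμ : 0 ≤ μ) :
    0 < ∫ x, Real.exp (-μ * |x|) * U x := by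
  rw [integral_pos_iff_support_of_nonneg_ae
    (Filter.Eventually.of_forall fun x => mul_nonneg (Real.exp_pos _).le (hU0 x))
    (U_exp_int hU hμ)]
  have hsupp : Function.support (fun x => Real.exp (-μ * |x|) * U x)
      = {x | U x ≠ 0} := by
    ext x
    simp [Function.support, Real.exp_ne_zero]
  rw [hsupp, pos_iff_ne_zero]
  intro hz
  apply hUne
  rw [Filter.EventuallyEq, ae_iff]
  simpa using hz

lemma A_pos (hU : Integrable U) (hU0 : ∀ x, 0 ≤ U x)
    (hUne : ¬ (U =ᵐ[volume] (0 : ℝ → ℝ))) : 0 < ∫ x, U x := by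
  have := B_pos hU hU0 hUne (le_refl (0:ℝ))
  simpa using this

lemma hh_eq_abs (U f : ℝ → ℝ) (hU0 : ∀ x, 0 ≤ U x) :
    (fun y => |Real.sqrt (U y) * f y|) = hh U f := by
  funext y
  rw [abs_mul, abs_of_nonneg (Real.sqrt_nonneg _)]
  rfl

/-- `EE μ (hh U f) (hh U f)` is a member of the sup set. -/
lemma EEhh_mem (hU : Integrable U) (hU0 : ∀ x, 0 ≤ U x)
    (hf : MemLp f 2 volume) (h1 : (∫ x, (f x) ^ 2) = 1) (μ : ℝ) :
    EE μ (hh U f) (hh U f) ∈ SS U μ := by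
  refine ⟨fun x => |f x|, abs_memℒp hf, by simpa [sq_abs] using h1, ?_⟩
  rw [Q_eq U (fun x => |f x|) μ]
  unfold EE hh
  rfl

/-- Any member of the sup set is dominated by the corresponding `EE` with `|f|`. -/
lemma Q_le_EEhh (hU : Integrable U) (hU0 : ∀ x, 0 ≤ U x)
    (hf : MemLp f 2 volume) (hμ : 0 ≤ μ) :
    (∫ x, ∫ y, f x * Lker U μ x y * f y) ≤ EE μ (hh U f) (hh U f) := by
  rw [Q_eq U f μ]
  set g : ℝ → ℝ := fun x => Real.sqrt (U x) * f x with hg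
  have hgint : Integrable g := mul_int (sU_mem hU hU0) hf
  have hhint : Integrable (hh U f) := hh_int hU hU0 hf
  unfold EE
  refine integral_mono (outer_int hgint hgint hμ) (outer_int hhint hhint hμ) fun x => ?_
  calc g x * K g μ x ≤ |g x * K g μ x| := le_abs_self _
    _ = |g x| * |K g μ x| := abs_mul _ _
    _ ≤ hh U f x * K (hh U f) μ x := by
        have h1' : |g x| = hh U f x := by
          rw [hg]; simp only []
          rw [abs_mul, abs_of_nonneg (Real.sqrt_nonneg _)]; rfl
        rw [h1']
        refine mul_le_mul_of_nonneg_left ?_ (hh_nonneg U f x)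
        have := K_abs_le' hgint hμ x
        rwa [hg, hh_eq_abs U f hU0] at this

/-- Uniform upper bound: every `EE μ (hh U f) (hh U f)` is at most `∫ U`. -/
lemma EEhh_le (hU : Integrable U) (hU0 : ∀ x, 0 ≤ U x)
    (hf : MemLp f 2 volume) (h1 : (∫ x, (f x) ^ 2) = 1) (hμ : 0 ≤ μ) :
    EE μ (hh U f) (hh U f) ≤ ∫ x, U x := by
  have hhint : Integrable (hh U f) := hh_int hU hU0 hf
  set C : ℝ := ∫ x, hh U f x with hC
  have hC0 : 0 ≤ C := integral_nonneg (hh_nonneg U f)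
  have hCle : C ≤ Real.sqrt (∫ x, U x) := hh_integral_le hU hU0 hf h1
  have step1 : EE μ (hh U f) (hh U f) ≤ ∫ x, hh U f x * C := by
    unfold EE
    refine integral_mono (outer_int hhint hhint hμ) (hhint.mul_const C) fun x => ?_
    refine mul_le_mul_of_nonneg_left ?_ (hh_nonneg U f x)
    have := K_abs_le hhint hμ x
    have habs : (∫ y, |hh U f y|) = C := by
      rw [hC]
      exact integral_congr_ae (Filter.Eventually.of_forall fun y =>
        abs_of_nonneg (hh_nonneg U f y))
    rw [habs] at this
    exact le_of_abs_le this
  have step2 : (∫ x, hh U f x * C) = C * C := by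
    rw [integral_mul_const, hC]
  calc EE μ (hh U f) (hh U f) ≤ C * C := by rw [← step2]; exact step1
    _ ≤ Real.sqrt (∫ x, U x) * Real.sqrt (∫ x, U x) := mul_le_mul hCle hCle hC0 (Real.sqrt_nonneg _)
    _ = ∫ x, U x := Real.mul_self_sqrt (integral_nonneg hU0)

lemma SS_le (hU : Integrable U) (hU0 : ∀ x, 0 ≤ U x) (hμ : 0 ≤ μ) :
    ∀ r ∈ SS U μ, r ≤ ∫ x, U x := by
  rintro r ⟨f, hf, h1, rfl⟩
  exact (Q_le_EEhh hU hU0 hf hμ).trans (EEhh_le hU hU0 hf h1 hμ)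

lemma SS_bdd (hU : Integrable U) (hU0 : ∀ x, 0 ≤ U x) (hμ : 0 ≤ μ) :
    BddAbove (SS U μ) := ⟨∫ x, U x, SS_le hU hU0 hμ⟩

lemma K_const_mul (g : ℝ → ℝ) (c μ x : ℝ) :
    K (fun y => c * g y) μ x = c * K g μ x := by
  unfold K
  rw [← integral_const_mul]
  congr 1
  funext y
  ring

/-- The normalized profile `f₀ = √U / √(∫ U)` and positivity of the quadratic form. -/
lemma lam1_pos (hU : Integrable U) (hU0 : ∀ x, 0 ≤ U x)
    (hUne : ¬ (U =ᵐ[volume] (0 : ℝ → ℝ))) (hμ : 0 ≤ μ) :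
    (SS U μ).Nonempty ∧ 0 < lam1 U μ := by
  set A : ℝ := ∫ x, U x with hA
  have hA0 : 0 < A := A_pos hU hU0 hUne
  set B : ℝ := ∫ x, Real.exp (-μ * |x|) * U x with hB
  have hB0 : 0 < B := B_pos hU hU0 hUne hμ
  set f₀ : ℝ → ℝ := fun x => (Real.sqrt A)⁻¹ * Real.sqrt (U x) with hf₀def
  have hf₀ : MemLp f₀ 2 volume := (sU_mem hU hU0).const_mul _
  have hsq : ∀ x, f₀ x ^ 2 = A⁻¹ * U x := fun x => by
    rw [hf₀def]
    simp only []
    rw [mul_pow, inv_pow, Real.sq_sqrt hA0.le, Real.sq_sqrt (hU0 x)]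
  have h1 : (∫ x, (f₀ x) ^ 2) = 1 := by
    rw [integral_congr_ae (Filter.Eventually.of_forall hsq), integral_const_mul, ← hA,
      inv_mul_cancel₀ hA0.ne']
  -- the member
  set r₀ : ℝ := ∫ x, ∫ y, f₀ x * Lker U μ x y * f₀ y with hr₀
  have hmem : r₀ ∈ SS U μ := ⟨f₀, hf₀, h1, rfl⟩
  -- lower bound for r₀
  have hgeq : (fun y => Real.sqrt (U y) * f₀ y) = fun y => (Real.sqrt A)⁻¹ * U y := by
    funext y
    rw [hf₀def]
    simp only []
    rw [← mul_assoc, mul_comm (Real.sqrt (U y)), mul_assoc, Real.mul_self_sqrt (hU0 y)]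
  have hr₀eq : r₀ = A⁻¹ * ∫ x, U x * K U μ x := by
    rw [hr₀, Q_eq U f₀ μ, EE, hgeq]
    have hpt : ∀ x, Real.sqrt (U x) * f₀ x * K (fun y => (Real.sqrt A)⁻¹ * U y) μ x
        = A⁻¹ * (U x * K U μ x) := by
      intro x
      have h1' : Real.sqrt (U x) * f₀ x = (Real.sqrt A)⁻¹ * U x := congr_fun hgeq x
      rw [h1', K_const_mul]
      have h2' : (Real.sqrt A)⁻¹ * (Real.sqrt A)⁻¹ = A⁻¹ := by
        rw [← mul_inv, Real.mul_self_sqrt hA0.le]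
      rw [← h2']
      ring
    calc (∫ x, Real.sqrt (U x) * f₀ x * K (fun y => (Real.sqrt A)⁻¹ * U y) μ x)
        = ∫ x, A⁻¹ * (U x * K U μ x) :=
          integral_congr_ae (Filter.Eventually.of_forall hpt)
      _ = A⁻¹ * ∫ x, U x * K U μ x := integral_const_mul _ _
  have hKlow : ∀ x, Real.exp (-μ * |x|) * B ≤ K U μ x := by
    intro x
    have : (∫ y, Real.exp (-μ * |x|) * (Real.exp (-μ * |y|) * U y))
        = Real.exp (-μ * |x|) * B := integral_const_mul _ _
    rw [← this]
    unfold K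
    refine integral_mono ((U_exp_int hU hμ).const_mul _) (K_int hU hμ x) fun y => ?_
    rw [← mul_assoc, ← Real.exp_add]
    refine mul_le_mul_of_nonneg_right ?_ (hU0 y)
    rw [Real.exp_le_exp]
    have habs : |x - y| ≤ |x| + |y| := abs_sub x y
    nlinarith [abs_nonneg x, abs_nonneg y]
  have hlow : B * B ≤ ∫ x, U x * K U μ x := by
    have e1 : (∫ x, U x * (Real.exp (-μ * |x|) * B)) = B * B := by
      have : ∀ x, U x * (Real.exp (-μ * |x|) * B) = B * (Real.exp (-μ * |x|) * U x) := by
        intro x; ring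
      rw [integral_congr_ae (Filter.Eventually.of_forall this), integral_const_mul, ← hB]
    rw [← e1]
    refine integral_mono ?_ (outer_int hU hU hμ) fun x => ?_
    · have : ∀ x, U x * (Real.exp (-μ * |x|) * B) = B * (Real.exp (-μ * |x|) * U x) := by
        intro x; ring
      exact ((U_exp_int hU hμ).const_mul B).congr
        (Filter.Eventually.of_forall fun x => (this x).symm)
    · exact mul_le_mul_of_nonneg_left (hKlow x) (hU0 x)
  have hr₀pos : 0 < r₀ := by
    rw [hr₀eq]
    have : 0 < A⁻¹ * (B * B) := by positivity
    calc (0:ℝ) < A⁻¹ * (B * B) := this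
      _ ≤ A⁻¹ * ∫ x, U x * K U μ x :=
        mul_le_mul_of_nonneg_left hlow (by positivity)
  refine ⟨⟨r₀, hmem⟩, ?_⟩
  rw [lam1_eq]
  exact lt_of_lt_of_le hr₀pos (le_csSup (SS_bdd hU hU0 hμ) hmem)

/-- Convexity of the quadratic form in `μ`. -/
lemma EE_convex (hU : Integrable U) (hU0 : ∀ x, 0 ≤ U x) (hf : MemLp f 2 volume)
    {a b t : ℝ} (ha : 0 ≤ a) (hb : 0 ≤ b) (ht0 : 0 ≤ t) (ht1 : t ≤ 1) :
    EE ((1-t)*a + t*b) (hh U f) (hh U f)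
      ≤ (1-t) * EE a (hh U f) (hh U f) + t * EE b (hh U f) (hh U f) := by
  set μ := (1-t)*a + t*b with hμdef
  have hμ : 0 ≤ μ := by nlinarith
  have hhint : Integrable (hh U f) := hh_int hU hU0 hf
  have hexp : ∀ x y : ℝ, Real.exp (-μ * |x - y|)
      ≤ (1-t) * Real.exp (-a * |x - y|) + t * Real.exp (-b * |x - y|) := by
    intro x y
    have := convexOn_exp.2 (Set.mem_univ (-(a * |x - y|))) (Set.mem_univ (-(b * |x - y|)))
      (by linarith : (0:ℝ) ≤ 1 - t) ht0 (by ring)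
    simp only [smul_eq_mul, ← neg_mul] at this
    have harg : (1-t) * (-a * |x - y|) + t * (-b * |x - y|) = -μ * |x - y| := by
      rw [hμdef]; ring
    rwa [harg] at this
  have hKle : ∀ x, K (hh U f) μ x ≤ (1-t) * K (hh U f) a x + t * K (hh U f) b x := by
    intro x
    have hint1 : Integrable (fun y => ((1-t) * Real.exp (-a * |x - y|)
        + t * Real.exp (-b * |x - y|)) * hh U f y) := by
      have := (((K_int hhint ha x).const_mul (1-t)).add ((K_int hhint hb x).const_mul t))
      refine this.congr (Filter.Eventually.of_forall fun y => ?_)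
      simp only [Pi.add_apply]
      ring
    have step : K (hh U f) μ x ≤ ∫ y, ((1-t) * Real.exp (-a * |x - y|)
        + t * Real.exp (-b * |x - y|)) * hh U f y := by
      unfold K
      refine integral_mono (K_int hhint hμ x) hint1 fun y => ?_
      exact mul_le_mul_of_nonneg_right (hexp x y) (hh_nonneg U f y)
    refine step.trans (le_of_eq ?_)
    have : ∀ y, ((1-t) * Real.exp (-a * |x - y|) + t * Real.exp (-b * |x - y|)) * hh U f y
        = (1-t) * (Real.exp (-a * |x - y|) * hh U f y)
          + t * (Real.exp (-b * |x - y|) * hh U f y) := fun y => by ring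
    rw [integral_congr_ae (Filter.Eventually.of_forall this),
      integral_add ((K_int hhint ha x).const_mul (1-t)) ((K_int hhint hb x).const_mul t),
      integral_const_mul, integral_const_mul]
    rfl
  have hrhs : Integrable (fun x => hh U f x * ((1-t) * K (hh U f) a x
      + t * K (hh U f) b x)) := by
    have := ((outer_int hhint hhint ha).const_mul (1-t)).add
      ((outer_int hhint hhint hb).const_mul t)
    refine this.congr (Filter.Eventually.of_forall fun x => ?_)
    simp only [Pi.add_apply]
    ring
  have step2 : EE μ (hh U f) (hh U f)
      ≤ ∫ x, hh U f x * ((1-t) * K (hh U f) a x + t * K (hh U f) b x) := by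
    unfold EE
    refine integral_mono (outer_int hhint hhint hμ) hrhs fun x => ?_
    exact mul_le_mul_of_nonneg_left (hKle x) (hh_nonneg U f x)
  refine step2.trans (le_of_eq ?_)
  have : ∀ x, hh U f x * ((1-t) * K (hh U f) a x + t * K (hh U f) b x)
      = (1-t) * (hh U f x * K (hh U f) a x) + t * (hh U f x * K (hh U f) b x) :=
    fun x => by ring
  rw [integral_congr_ae (Filter.Eventually.of_forall this),
    integral_add ((outer_int hhint hhint ha).const_mul (1-t))
      ((outer_int hhint hhint hb).const_mul t),
    integral_const_mul, integral_const_mul]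
  rfl

/-- Decay: for large `μ` the quadratic form is uniformly small. -/
lemma decay (hU : Integrable U) (hU0 : ∀ x, 0 ≤ U x)
    (hUne : ¬ (U =ᵐ[volume] (0 : ℝ → ℝ))) {c μlow : ℝ} (hc : 0 < c) (hμlow : 0 ≤ μlow) :
    ∃ μ₃ : ℝ, μlow < μ₃ ∧ 0 ≤ μ₃ ∧ ∀ f : ℝ → ℝ, MemLp f 2 volume →
      (∫ x, (f x) ^ 2) = 1 → EE μ₃ (hh U f) (hh U f) < c := by
  set A : ℝ := ∫ x, U x with hA
  have hA0 : 0 < A := A_pos hU hU0 hUne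
  set sA : ℝ := Real.sqrt A with hsA
  have hsA0 : 0 < sA := Real.sqrt_pos.2 hA0
  set ε : ℝ := (c / (2*(sA+1)))^2 with hε
  have hε0 : 0 < ε := by positivity
  have hsqε : Real.sqrt ε = c / (2*(sA+1)) := Real.sqrt_sq (by positivity)
  -- absolute continuity of the integral of U
  have hfin : (∫⁻ x, ENNReal.ofReal (U x)) ≠ ⊤ := by
    have heq : ∀ x, ENNReal.ofReal (U x) = ‖U x‖ₑ := fun x =>
      (Real.enorm_eq_ofReal (hU0 x)).symm
    rw [lintegral_congr heq]
    exact ne_of_lt hU.2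
  obtain ⟨δ, hδ0, hδ⟩ := exists_pos_setLIntegral_lt_of_measure_lt hfin
    (ε := ENNReal.ofReal ε) (ENNReal.ofReal_pos.2 hε0).ne'
  set δ' : ENNReal := min δ 1 with hδ'
  have hδ'0 : 0 < δ' := lt_min hδ0 zero_lt_one
  have hδ'top : δ' ≠ ⊤ := ne_top_of_le_ne_top ENNReal.one_ne_top (min_le_right _ _)
  set r : ℝ := δ'.toReal / 4 with hr
  have hr0 : 0 < r := by
    have := ENNReal.toReal_pos hδ'0.ne' hδ'top
    positivity
  have hball : ∀ x : ℝ, volume (Metric.closedBall x r) < δ := by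
    intro x
    rw [Real.volume_closedBall]
    have h2r : 2 * r = δ'.toReal / 2 := by rw [hr]; ring
    have h1 : ENNReal.ofReal (2*r) < δ' := by
      rw [h2r]
      calc ENNReal.ofReal (δ'.toReal / 2) < ENNReal.ofReal δ'.toReal := by
            rw [ENNReal.ofReal_lt_ofReal_iff (ENNReal.toReal_pos hδ'0.ne' hδ'top)]
            linarith [ENNReal.toReal_pos hδ'0.ne' hδ'top]
        _ = δ' := ENNReal.ofReal_toReal hδ'top
    exact lt_of_lt_of_le h1 (min_le_left _ _)
  have hUs : ∀ x : ℝ, (∫ y in Metric.closedBall x r, U y) ≤ ε := by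
    intro x
    have hl := hδ _ (hball x)
    have heq : (∫ y in Metric.closedBall x r, U y)
        = (∫⁻ y in Metric.closedBall x r, ENNReal.ofReal (U y)).toReal :=
      integral_eq_lintegral_of_nonneg_ae (Filter.Eventually.of_forall hU0) hU.1.restrict
    rw [heq]
    exact ENNReal.toReal_le_of_le_ofReal hε0.le hl.le
  -- choice of μ₃
  set μ₃ : ℝ := max (μlow + 1) ((Real.log (2*A/c) + 1)/r) with hμ₃def
  have hμ₃low : μlow < μ₃ := lt_of_lt_of_le (lt_add_one μlow) (le_max_left _ _)
  have hμ₃0 : 0 ≤ μ₃ := le_of_lt (lt_of_le_of_lt hμlow hμ₃low)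
  have hexp3 : Real.exp (-μ₃ * r) * A < c/2 := by
    have h1 : (Real.log (2*A/c) + 1)/r ≤ μ₃ := le_max_right _ _
    have h2 : Real.log (2*A/c) + 1 ≤ μ₃ * r := by
      rw [div_le_iff₀ hr0] at h1; linarith
    have h3 : Real.exp (-μ₃*r) < Real.exp (-Real.log (2*A/c)) :=
      Real.exp_lt_exp.2 (by linarith)
    have h5 : Real.exp (-Real.log (2*A/c)) = c/(2*A) := by
      rw [Real.exp_neg, Real.exp_log (by positivity : (0:ℝ) < 2*A/c), inv_div]
    have h6 : Real.exp (-μ₃*r) < c/(2*A) := h5 ▸ h3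
    calc Real.exp (-μ₃ * r) * A < (c/(2*A)) * A :=
          mul_lt_mul_of_pos_right h6 hA0
      _ = c/2 := by field_simp
  refine ⟨μ₃, hμ₃low, hμ₃0, fun f hf h1 => ?_⟩
  have hhint : Integrable (hh U f) := hh_int hU hU0 hf
  have hhI : (∫ x, hh U f x) ≤ sA := hh_integral_le hU hU0 hf h1
  have hhI0 : 0 ≤ ∫ x, hh U f x := integral_nonneg (hh_nonneg U f)
  have hK : ∀ x, K (hh U f) μ₃ x ≤ Real.sqrt ε + Real.exp (-μ₃*r) * sA := by
    intro x
    have hsplit : K (hh U f) μ₃ x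
        = (∫ y in Metric.closedBall x r, Real.exp (-μ₃ * |x - y|) * hh U f y)
          + ∫ y in (Metric.closedBall x r)ᶜ, Real.exp (-μ₃ * |x - y|) * hh U f y :=
      (integral_add_compl measurableSet_closedBall (K_int hhint hμ₃0 x)).symm
    have hp1 : (∫ y in Metric.closedBall x r, Real.exp (-μ₃ * |x - y|) * hh U f y)
        ≤ Real.sqrt ε := by
      calc (∫ y in Metric.closedBall x r, Real.exp (-μ₃ * |x - y|) * hh U f y)
          ≤ ∫ y in Metric.closedBall x r, hh U f y :=
            setIntegral_mono_on ((K_int hhint hμ₃0 x).integrableOn)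
              hhint.integrableOn measurableSet_closedBall
              (fun y _ => mul_le_of_le_one_left (hh_nonneg U f y) (expk_le_one hμ₃0 x y))
        _ ≤ Real.sqrt (∫ y in Metric.closedBall x r, U y) :=
            hh_setIntegral_le hU hU0 hf h1 _
        _ ≤ Real.sqrt ε := Real.sqrt_le_sqrt (hUs x)
    have hp2 : (∫ y in (Metric.closedBall x r)ᶜ, Real.exp (-μ₃ * |x - y|) * hh U f y)
        ≤ Real.exp (-μ₃*r) * sA := by
      have step : (∫ y in (Metric.closedBall x r)ᶜ, Real.exp (-μ₃ * |x - y|) * hh U f y)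
          ≤ ∫ y in (Metric.closedBall x r)ᶜ, Real.exp (-μ₃*r) * hh U f y := by
        refine setIntegral_mono_on ((K_int hhint hμ₃0 x).integrableOn)
          ((hhint.const_mul _).integrableOn) measurableSet_closedBall.compl
          (fun y hy => ?_)
        have hyd : r < |x - y| := by
          have := hy
          rw [Set.mem_compl_iff, Metric.mem_closedBall, not_le, Real.dist_eq] at this
          rwa [abs_sub_comm]
        refine mul_le_mul_of_nonneg_right (Real.exp_le_exp.2 ?_) (hh_nonneg U f y)
        nlinarith
      refine step.trans ?_
      rw [integral_const_mul]
      refine mul_le_mul_of_nonneg_left ?_ (Real.exp_pos _).le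
      exact (setIntegral_le_integral hhint
        (Filter.Eventually.of_forall (hh_nonneg U f))).trans hhI
    rw [hsplit]
    exact add_le_add hp1 hp2
  have hEE : EE μ₃ (hh U f) (hh U f)
      ≤ (∫ x, hh U f x) * (Real.sqrt ε + Real.exp (-μ₃*r) * sA) := by
    unfold EE
    rw [← integral_mul_const]
    refine integral_mono (outer_int hhint hhint hμ₃0)
      (hhint.mul_const _) fun x => ?_
    exact mul_le_mul_of_nonneg_left (hK x) (hh_nonneg U f x)
  have hfinal : (∫ x, hh U f x) * (Real.sqrt ε + Real.exp (-μ₃*r) * sA)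
      ≤ sA * (Real.sqrt ε + Real.exp (-μ₃*r) * sA) := by
    refine mul_le_mul_of_nonneg_right hhI ?_
    positivity
  have hlast : sA * (Real.sqrt ε + Real.exp (-μ₃*r) * sA) < c := by
    have e1 : sA * sA = A := Real.mul_self_sqrt hA0.le
    have e2 : sA * Real.sqrt ε < c/2 := by
      have hsq0 : 0 < Real.sqrt ε := by rw [hsqε]; positivity
      have hq : Real.sqrt ε * (2*(sA+1)) = c := by
        rw [hsqε]; field_simp
      have h2 : 2 * (sA * Real.sqrt ε) < c := by nlinarith [hsq0, hsA0]
      linarith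
    nlinarith [hexp3, Real.exp_pos (-μ₃*r), hsA0]
  exact lt_of_le_of_lt (hEE.trans hfinal) hlast

end Lam1Aux

open Lam1Aux in
/-- **Strict monotonicity of the largest eigenvalue of `𝓛_μ`**: for `U ∈ L¹(ℝ)`,
`U ≥ 0`, `U` not a.e. zero, and `0 ≤ μ₂ < μ₁`, one has `λ₁(𝓛_{μ₁}) < λ₁(𝓛_{μ₂})`. -/
theorem lam1_strict_anti
    (U : ℝ → ℝ) (hU : Integrable U) (hU0 : ∀ x, 0 ≤ U x)
    (hUne : ¬ (U =ᵐ[volume] (0 : ℝ → ℝ)))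
    (μ₁ μ₂ : ℝ) (hμ₂ : 0 ≤ μ₂) (hμ : μ₂ < μ₁) :
    lam1 U μ₁ < lam1 U μ₂ := by
  by_contra hcon
  push_neg at hcon
  have hμ₁0 : 0 ≤ μ₁ := hμ₂.trans hμ.le
  obtain ⟨hne₁, hpos₁⟩ := lam1_pos hU hU0 hUne hμ₁0
  set L : ℝ := lam1 U μ₁ with hL
  have hL2 : 0 < L/2 := by positivity
  obtain ⟨μ₃, hμ₃gt, hμ₃0, hdec⟩ := decay hU hU0 hUne hL2 hμ₁0
  have hlam3 : lam1 U μ₃ ≤ L/2 := by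
    rw [lam1_eq]
    refine csSup_le (lam1_pos hU hU0 hUne hμ₃0).1 ?_
    rintro r ⟨f, hf, h1, rfl⟩
    exact (Q_le_EEhh hU hU0 hf hμ₃0).trans (hdec f hf h1).le
  set t : ℝ := (μ₁ - μ₂)/(μ₃ - μ₂) with ht
  have hμ₃μ₂ : 0 < μ₃ - μ₂ := by linarith
  have hμ₁μ₂ : 0 < μ₁ - μ₂ := by linarith
  have ht0 : 0 < t := by positivity
  have ht1 : t ≤ 1 := by
    rw [ht, div_le_one hμ₃μ₂]
    linarith
  have hconv_pt : (1-t)*μ₂ + t*μ₃ = μ₁ := by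
    rw [ht]
    field_simp
    ring
  have hconv : lam1 U μ₁ ≤ (1-t) * lam1 U μ₂ + t * lam1 U μ₃ := by
    rw [lam1_eq]
    refine csSup_le hne₁ ?_
    rintro r ⟨f, hf, h1, rfl⟩
    have h2 := Q_le_EEhh hU hU0 hf hμ₁0
    have h3 := EE_convex hU hU0 hf hμ₂ hμ₃0 ht0.le ht1
    rw [hconv_pt] at h3
    have h4 : EE μ₂ (hh U f) (hh U f) ≤ lam1 U μ₂ :=
      le_csSup (SS_bdd hU hU0 hμ₂) (EEhh_mem hU hU0 hf h1 μ₂)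
    have h5 : EE μ₃ (hh U f) (hh U f) ≤ lam1 U μ₃ :=
      le_csSup (SS_bdd hU hU0 hμ₃0) (EEhh_mem hU hU0 hf h1 μ₃)
    have h6 : (1-t) * EE μ₂ (hh U f) (hh U f) ≤ (1-t) * lam1 U μ₂ :=
      mul_le_mul_of_nonneg_left h4 (by linarith)
    have h7 : t * EE μ₃ (hh U f) (hh U f) ≤ t * lam1 U μ₃ :=
      mul_le_mul_of_nonneg_left h5 ht0.le
    linarith
  have h8 : (1-t) * lam1 U μ₂ ≤ (1-t) * L :=
    mul_le_mul_of_nonneg_left hcon (by linarith)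
  have h9 : t * lam1 U μ₃ ≤ t * (L/2) :=
    mul_le_mul_of_nonneg_left hlam3 ht0.le
  have h10 : L ≤ (1-t)*L + t*(L/2) := by
    calc L = lam1 U μ₁ := hL
      _ ≤ (1-t) * lam1 U μ₂ + t * lam1 U μ₃ := hconv
      _ ≤ (1-t)*L + t*(L/2) := add_le_add h8 h9
  nlinarith [hpos₁, ht0]
end

section
/- Fix m ∈ ℕ and weights u₀,...,u_m ≥ 0. For a = (a₁,...,a_m) ∈ [0,1]^m let L(a) be the real symmetric (m+1)×(m+1) matrix with entries L(a)_{ij} = u_i u_j ∏_{k=min(i,j)+1}^{max(i,j)} a_k (so L(a)_{ii} = u_i²). Then for every n ≤ m+1 the sum of the n largest eigenvalues of L(a) is monotone: if 0 ≤ a_k ≤ a'_k ≤ 1 for all k ∈ {1,...,m}, then the sum of the n largest eigenvalues of L(a) is less than or equal to the sum of the n largest eigenvalues of L(a'). -/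
open Finset

/-- The `(m+1) × (m+1)` matrix `L(a)` of the toy model, with weights `u`:
`L(a)_{ij} = u_i u_j ∏_{k = min(i,j)+1}^{max(i,j)} a_k` (so `L(a)_{ii} = u_i²`). -/
noncomputable def Lmat (m : ℕ) (u : Fin (m + 1) → ℝ) (a : ℕ → ℝ) :
    Matrix (Fin (m + 1)) (Fin (m + 1)) ℝ :=
  Matrix.of fun i j =>
    u i * u j * ∏ k ∈ Finset.Ioc (min (i : ℕ) (j : ℕ)) (max (i : ℕ) (j : ℕ)), a k

/-- The sum of the `n` largest eigenvalues (counted with multiplicity, listed in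
decreasing order) of a real symmetric matrix; `0` if the matrix is not symmetric. -/
noncomputable def sumNLargest {N : ℕ} (A : Matrix (Fin N) (Fin N) ℝ) (n : ℕ) : ℝ :=
  if h : A.IsHermitian then
    ((((Finset.univ.val.map h.eigenvalues).sort (· ≤ ·)).reverse.take n).sum)
  else 0

lemma coe_ofFn_comp_sort (μ : Fin N → ℝ) :
    (↑(List.ofFn (μ ∘ Tuple.sort μ)) : Multiset ℝ) = Finset.univ.val.map μ := by
  rw [List.ofFn_eq_map, ← Multiset.map_coe]
  rw [show ((List.finRange N : List (Fin N)) : Multiset (Fin N)) = (univ : Finset (Fin N)).val from by rw [Fin.univ_def]]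
  rw [show Multiset.map (μ ∘ Tuple.sort μ) univ.val = Multiset.map μ (Multiset.map (Tuple.sort μ) univ.val) from by rw [Multiset.map_map]]
  congr 1
  rw [show Multiset.map (⇑(Tuple.sort μ)) univ.val = (univ.map (Tuple.sort μ).toEmbedding).val from rfl,
    Finset.map_univ_equiv]

lemma sort_eq_ofFn (μ : Fin N → ℝ) :
    ((Finset.univ.val.map μ).sort (· ≤ ·)) = List.ofFn (μ ∘ Tuple.sort μ) := by
  have hperm : List.Perm ((Finset.univ.val.map μ).sort (· ≤ ·)) (List.ofFn (μ ∘ Tuple.sort μ)) := by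
    rw [← Multiset.coe_eq_coe, Multiset.sort_eq, coe_ofFn_comp_sort]
  exact hperm.eq_of_pairwise (fun a b _ _ => le_antisymm)
    (Multiset.pairwise_sort _ _) (List.sortedLE_ofFn_iff.mpr (Tuple.monotone_sort μ)).pairwise

lemma reverse_ofFn (f : Fin N → ℝ) : (List.ofFn f).reverse = List.ofFn (f ∘ Fin.rev) := by
  apply List.ext_getElem
  · simp
  · intro i h1 h2
    simp only [List.getElem_reverse, List.getElem_ofFn, Function.comp_apply, List.length_ofFn] at *
    congr 1
    ext
    simp [Fin.rev]
    omega

lemma card_filter_lt (n : ℕ) (hn : n ≤ N) :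
    (Finset.univ.filter fun j : Fin N => (j : ℕ) < n).card = n := by
  have : (Finset.univ.filter fun j : Fin N => (j : ℕ) < n)
      = Finset.map ⟨Fin.castLE hn, Fin.castLE_injective hn⟩ Finset.univ := by
    ext j
    simp only [mem_filter, mem_univ, true_and, Finset.mem_map, Function.Embedding.coeFn_mk]
    constructor
    · intro hj; exact ⟨⟨j, hj⟩, rfl⟩
    · rintro ⟨i, rfl⟩; exact i.2
  rw [this, Finset.card_map, Finset.card_univ, Fintype.card_fin]

lemma exists_top_set (μ : Fin N → ℝ) (n : ℕ) (hn : n ≤ N) :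
    ∃ S : Finset (Fin N), S.card = n ∧
      ((((Finset.univ.val.map μ).sort (· ≤ ·)).reverse.take n).sum = ∑ i ∈ S, μ i) ∧
      ∀ i ∈ S, ∀ j, j ∉ S → μ j ≤ μ i := by
  classical
  set σ := Tuple.sort μ with hσ
  set ν := μ ∘ σ with hν
  have hmono : Monotone ν := Tuple.monotone_sort μ
  have hrev : (((Finset.univ.val.map μ).sort (· ≤ ·)).reverse) = List.ofFn (ν ∘ Fin.rev) := by
    rw [sort_eq_ofFn, reverse_ofFn]
  refine ⟨(Finset.univ.filter fun k : Fin N => (k : ℕ) < n).image (fun k => σ (Fin.rev k)), ?_, ?_, ?_⟩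
  · rw [Finset.card_image_of_injective _ (show Function.Injective fun k : Fin N => σ (Fin.rev k) from fun x y h => Fin.rev_injective (σ.injective h)), card_filter_lt n hn]
  · rw [hrev, List.sum_take_ofFn]
    rw [Finset.sum_image (by intro x _ y _ h; exact Fin.rev_injective (σ.injective h))]
    rfl
  · intro i hi j hj
    rw [Finset.mem_image] at hi
    obtain ⟨k, hk, rfl⟩ := hi
    rw [Finset.mem_filter] at hk
    have hj' : ¬ ((Fin.rev (σ.symm j) : ℕ) < n) := by
      intro hlt
      apply hj
      rw [Finset.mem_image]
      exact ⟨Fin.rev (σ.symm j), Finset.mem_filter.mpr ⟨Finset.mem_univ _, hlt⟩, by simp⟩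
    have : μ j = ν (Fin.rev (Fin.rev (σ.symm j))) := by simp [hν]
    rw [this]
    have : μ (σ (Fin.rev k)) = ν (Fin.rev k) := rfl
    rw [this]
    apply hmono
    apply Fin.rev_le_rev.mpr
    have := hk.2
    omega


lemma comb_bound (μ w : Fin N → ℝ) (S : Finset (Fin N))
    (hw0 : ∀ i, 0 ≤ w i) (hw1 : ∀ i, w i ≤ 1)
    (hsum : ∑ i, w i = (S.card : ℝ))
    (hdom : ∀ i ∈ S, ∀ j, j ∉ S → μ j ≤ μ i) :
    ∑ i, μ i * w i ≤ ∑ i ∈ S, μ i := by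
  classical
  rcases S.eq_empty_or_nonempty with rfl | hne
  · simp only [Finset.card_empty, Nat.cast_zero] at hsum
    have hz : ∀ i ∈ Finset.univ, w i = 0 :=
      (Finset.sum_eq_zero_iff_of_nonneg (fun i _ => hw0 i)).mp hsum
    rw [Finset.sum_empty]
    rw [Finset.sum_eq_zero (fun i hi => by rw [hz i hi, mul_zero])]
  · obtain ⟨i₀, hi₀S, hi₀min⟩ := S.exists_min_image μ hne
    set c := μ i₀ with hc
    have split : ∑ i, μ i * w i = ∑ i ∈ S, μ i * w i + ∑ i ∈ Sᶜ, μ i * w i :=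
      (Finset.sum_add_sum_compl S _).symm
    have splitw : ∑ i ∈ S, w i + ∑ i ∈ Sᶜ, w i = (S.card : ℝ) := by
      rw [Finset.sum_add_sum_compl]; exact hsum
    have h1 : ∑ i ∈ S, μ i * w i ≤ ∑ i ∈ S, ((μ i - c) + c * w i) := by
      apply Finset.sum_le_sum
      intro i hi
      have hcle : c ≤ μ i := hi₀min i hi
      nlinarith [hw0 i, hw1 i]
    have h2 : ∑ i ∈ Sᶜ, μ i * w i ≤ ∑ i ∈ Sᶜ, c * w i := by
      apply Finset.sum_le_sum
      intro j hj
      have : μ j ≤ c := hdom i₀ hi₀S j (Finset.mem_compl.mp hj)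
      nlinarith [hw0 j]
    calc ∑ i, μ i * w i ≤ ∑ i ∈ S, ((μ i - c) + c * w i) + ∑ i ∈ Sᶜ, c * w i := by
          rw [split]; exact add_le_add h1 h2
      _ = ∑ i ∈ S, μ i - c * S.card + c * (∑ i ∈ S, w i + ∑ i ∈ Sᶜ, w i) := by
          rw [Finset.sum_add_distrib, Finset.sum_sub_distrib, ← Finset.mul_sum, ← Finset.mul_sum,
            Finset.sum_const, nsmul_eq_mul]
          ring
      _ = ∑ i ∈ S, μ i := by rw [splitw]; ring

lemma sumNLargest_herm {A : Matrix (Fin N) (Fin N) ℝ} (hA : A.IsHermitian) (n : ℕ) :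
    sumNLargest A n =
      ((((Finset.univ.val.map hA.eigenvalues).sort (· ≤ ·)).reverse.take n).sum) := by
  rw [sumNLargest, dif_pos hA]

open Matrix in
lemma trace_le_sumNLargest {A : Matrix (Fin N) (Fin N) ℝ} (hA : A.IsHermitian)
    {n : ℕ} (hn : n ≤ N) {ι : Type} [Fintype ι] [DecidableEq ι]
    (hcard : Fintype.card ι = n) (V : Matrix (Fin N) ι ℝ) (hV : Vᴴ * V = 1) :
    Matrix.trace (Vᴴ * A * V) ≤ sumNLargest A n := by
  classical
  obtain ⟨S, hScard, hSsum, hSdom⟩ := exists_top_set hA.eigenvalues n hn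
  set U : Matrix (Fin N) (Fin N) ℝ := (hA.eigenvectorUnitary : Matrix (Fin N) (Fin N) ℝ) with hU
  have hU2 : U * star U = 1 := (Matrix.mem_unitaryGroup_iff).mp hA.eigenvectorUnitary.2
  set W : Matrix (Fin N) ι ℝ := (star U) * V with hW
  have hWW : Wᴴ * W = 1 := by
    rw [hW, conjTranspose_mul, Matrix.mul_assoc, ← Matrix.mul_assoc (star U)ᴴ]
    rw [star_eq_conjTranspose, conjTranspose_conjTranspose, ← star_eq_conjTranspose, hU2,
      Matrix.one_mul, hV]
  set μ := hA.eigenvalues with hμ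
  have htr : Matrix.trace (Vᴴ * A * V) = Matrix.trace (Wᴴ * Matrix.diagonal μ * W) := by
    have hspec : A = U * Matrix.diagonal μ * star U := by
      have := hA.spectral_theorem
      simpa [RCLike.ofReal_real_eq_id] using this
    rw [hspec, hW, conjTranspose_mul, star_eq_conjTranspose, conjTranspose_conjTranspose]
    rw [← star_eq_conjTranspose]
    simp only [Matrix.mul_assoc]
  set w : Fin N → ℝ := fun j => ∑ s : ι, (W j s)^2 with hw
  have htr2 : Matrix.trace (Wᴴ * Matrix.diagonal μ * W) = ∑ j, μ j * w j := by
    rw [Matrix.mul_assoc, Matrix.trace]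
    simp only [Matrix.diag_apply, Matrix.mul_apply, Matrix.diagonal_mul,
      Matrix.conjTranspose_apply, star_trivial]
    rw [Finset.sum_comm]
    apply Finset.sum_congr rfl
    intro j _
    rw [hw, Finset.mul_sum]
    apply Finset.sum_congr rfl
    intro s _
    rw [Finset.sum_eq_single j (fun b _ hb => by simp [Matrix.diagonal_apply, Ne.symm hb])
      (by simp)]
    simp only [Matrix.diagonal_apply_eq]
    ring
  set P : Matrix (Fin N) (Fin N) ℝ := W * Wᴴ with hP
  have hPP : P * P = P := by
    rw [hP, Matrix.mul_assoc, ← Matrix.mul_assoc Wᴴ, hWW, Matrix.one_mul]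
  have hPsymm : ∀ i j, P i j = P j i := by
    intro i j
    simp [hP, Matrix.mul_apply, Matrix.conjTranspose_apply, mul_comm]
  have hPdiag : ∀ j, P j j = w j := by
    intro j
    simp [hP, Matrix.mul_apply, Matrix.conjTranspose_apply, hw, sq]
  have hw0 : ∀ j, 0 ≤ w j := fun j => Finset.sum_nonneg fun s _ => sq_nonneg _
  have hw1 : ∀ j, w j ≤ 1 := by
    intro j
    have h1 : P j j = ∑ k, (P j k)^2 := by
      conv_lhs => rw [← hPP]
      rw [Matrix.mul_apply]
      apply Finset.sum_congr rfl
      intro k _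
      rw [hPsymm j k, sq]
    have h2 : (P j j)^2 ≤ ∑ k, (P j k)^2 :=
      Finset.single_le_sum (f := fun k => (P j k)^2) (fun k _ => sq_nonneg _) (Finset.mem_univ j)
    rw [← hPdiag j]
    nlinarith [hPdiag j, hw0 j]
  have hwsum : ∑ j, w j = (S.card : ℝ) := by
    have : ∑ j, w j = Matrix.trace (Wᴴ * W) := by
      rw [Matrix.trace]
      simp only [Matrix.diag_apply, Matrix.mul_apply, Matrix.conjTranspose_apply, star_trivial]
      rw [hw, Finset.sum_comm]
      simp [sq]
    rw [this, hWW, Matrix.trace_one, hScard, ← hcard]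
  rw [sumNLargest_herm hA n, hSsum, htr, htr2]
  exact comb_bound μ w S hw0 hw1 hwsum hSdom

open Polynomial in
lemma charpoly_conj_eq (U M V : Matrix (Fin N) (Fin N) ℝ) (h1 : U * V = 1) :
    (U * M * V).charpoly = M.charpoly := by
  unfold Matrix.charpoly
  have hUV : U.map (C : ℝ →+* ℝ[X]) * V.map (C : ℝ →+* ℝ[X]) = 1 := by
    rw [← Matrix.map_mul, h1, Matrix.map_one _ (map_zero _) (map_one _)]
  have hmat : Matrix.charmatrix (U * M * V) =
      U.map (C : ℝ →+* ℝ[X]) * Matrix.charmatrix M * V.map (C : ℝ →+* ℝ[X]) := by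
    unfold Matrix.charmatrix
    rw [Matrix.mul_sub, Matrix.sub_mul]
    congr 1
    · symm
      rw [(Matrix.scalar_commute (X : ℝ[X]) (fun r => Commute.all _ _)
          (U.map (C : ℝ →+* ℝ[X]))).symm.eq,
        Matrix.mul_assoc, hUV, Matrix.mul_one]
    · simp only [map_mul, RingHom.mapMatrix_apply]
  rw [hmat, Matrix.det_mul, Matrix.det_mul]
  have : (U.map (C : ℝ →+* ℝ[X])).det * (V.map (C : ℝ →+* ℝ[X])).det = 1 := by
    rw [← Matrix.det_mul, hUV, Matrix.det_one]
  calc (U.map (C : ℝ →+* ℝ[X])).det * (Matrix.charmatrix M).det * (V.map (C : ℝ →+* ℝ[X])).det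
      = (Matrix.charmatrix M).det *
        ((U.map (C : ℝ →+* ℝ[X])).det * (V.map (C : ℝ →+* ℝ[X])).det) := by ring
    _ = (Matrix.charmatrix M).det := by rw [this, mul_one]

open Polynomial in
lemma herm_charpoly {A : Matrix (Fin N) (Fin N) ℝ} (hA : A.IsHermitian) :
    A.charpoly =
      (Multiset.map (fun x : ℝ => X - C x) (Finset.univ.val.map hA.eigenvalues)).prod := by
  have hU2 : (hA.eigenvectorUnitary : Matrix (Fin N) (Fin N) ℝ) *
      star (hA.eigenvectorUnitary : Matrix (Fin N) (Fin N) ℝ) = 1 :=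
    (Matrix.mem_unitaryGroup_iff).mp hA.eigenvectorUnitary.2
  have hspec : A = (hA.eigenvectorUnitary : Matrix (Fin N) (Fin N) ℝ) *
      Matrix.diagonal hA.eigenvalues * star (hA.eigenvectorUnitary : Matrix (Fin N) (Fin N) ℝ) := by
    have := hA.spectral_theorem
    simpa [RCLike.ofReal_real_eq_id] using this
  conv_lhs => rw [hspec]
  rw [charpoly_conj_eq _ _ _ hU2]
  rw [Matrix.charpoly_of_upperTriangular _ (Matrix.blockTriangular_diagonal _)]
  rw [Multiset.map_map, Finset.prod_eq_multiset_prod]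
  apply congrArg
  apply Multiset.map_congr rfl
  intro i _
  simp [Matrix.diagonal_apply_eq]

open Polynomial in
lemma eig_multiset_conj {A B : Matrix (Fin N) (Fin N) ℝ} (hA : A.IsHermitian)
    (hB : B.IsHermitian) (D : Matrix (Fin N) (Fin N) ℝ) (hD : D * D = 1)
    (hBdef : B = D * A * D) :
    Finset.univ.val.map hB.eigenvalues = Finset.univ.val.map hA.eigenvalues := by
  have hch : B.charpoly = A.charpoly := by rw [hBdef]; exact charpoly_conj_eq D A D hD
  have h1 := herm_charpoly hA
  have h2 := herm_charpoly hB
  have := congrArg Polynomial.roots (h2.symm.trans (hch.trans h1))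
  rwa [Polynomial.roots_multiset_prod_X_sub_C, Polynomial.roots_multiset_prod_X_sub_C] at this

lemma sumNLargest_conj {A : Matrix (Fin N) (Fin N) ℝ} (hA : A.IsHermitian)
    (D : Matrix (Fin N) (Fin N) ℝ) (hD : D * D = 1) (hDh : D.IsHermitian) (n : ℕ) :
    sumNLargest (D * A * D) n = sumNLargest A n := by
  have hB : (D * A * D).IsHermitian := by
    rw [Matrix.IsHermitian, Matrix.conjTranspose_mul, Matrix.conjTranspose_mul, hA, hDh]
    rw [Matrix.mul_assoc]
  rw [sumNLargest_herm hB n, sumNLargest_herm hA n,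
    eig_multiset_conj hA hB D hD rfl]

open Matrix in
lemma sumNLargest_convex {A B : Matrix (Fin N) (Fin N) ℝ} (hA : A.IsHermitian)
    (hB : B.IsHermitian) {x y : ℝ} (hx : 0 ≤ x) (hy : 0 ≤ y)
    {n : ℕ} (hn : n ≤ N) :
    sumNLargest (x • A + y • B) n ≤ x * sumNLargest A n + y * sumNLargest B n := by
  classical
  set Cm : Matrix (Fin N) (Fin N) ℝ := x • A + y • B with hCm
  have hC : Cm.IsHermitian := by
    rw [Matrix.IsHermitian, Matrix.conjTranspose_add, Matrix.conjTranspose_smul,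
      Matrix.conjTranspose_smul, hA.eq, hB.eq]
    simp [hCm]
  obtain ⟨S, hScard, hSsum, _⟩ := exists_top_set hC.eigenvalues n hn
  set U : Matrix (Fin N) (Fin N) ℝ := (hC.eigenvectorUnitary : Matrix (Fin N) (Fin N) ℝ) with hU
  have hU1 : star U * U = 1 := (Matrix.mem_unitaryGroup_iff').mp hC.eigenvectorUnitary.2
  set V : Matrix (Fin N) {a // a ∈ S} ℝ := Matrix.of (fun i s => U i s.val) with hV
  have hVV : Vᴴ * V = 1 := by
    ext s t
    rw [Matrix.mul_apply]
    have : ∀ i, Vᴴ s i * V i t = star (U i s.val) * U i t.val := by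
      intro i; simp [hV, Matrix.conjTranspose_apply]
    rw [Finset.sum_congr rfl (fun i _ => this i)]
    have := congrFun (congrFun hU1 s.val) t.val
    rw [Matrix.mul_apply] at this
    simp only [Matrix.star_apply, Matrix.conjTranspose_apply] at this
    rw [show (∑ i, star (U i s.val) * U i t.val) = (1 : Matrix (Fin N) (Fin N) ℝ) s.val t.val
      from this]
    by_cases hst : s = t
    · subst hst; simp [Matrix.one_apply]
    · rw [Matrix.one_apply_ne (fun hc => hst (Subtype.ext hc)), Matrix.one_apply_ne hst]
  have hdiag : star U * Cm * U = Matrix.diagonal hC.eigenvalues := by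
    have := hC.conjStarAlgAut_star_eigenvectorUnitary
    simpa [RCLike.ofReal_real_eq_id, Unitary.conjStarAlgAut_apply] using this
  have htrC : Matrix.trace (Vᴴ * Cm * V) = ∑ i ∈ S, hC.eigenvalues i := by
    have hentry : ∀ s t : {a // a ∈ S},
        (Vᴴ * Cm * V) s t = (star U * Cm * U) s.val t.val := by
      intro s t
      rw [Matrix.mul_apply, Matrix.mul_apply]
      apply Finset.sum_congr rfl
      intro j _
      rw [Matrix.mul_apply, Matrix.mul_apply]
      have : ∀ i, Vᴴ s i * Cm i j = (star U) s.val i * Cm i j := by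
        intro i
        simp [hV, Matrix.conjTranspose_apply, Matrix.star_apply]
      rw [Finset.sum_congr rfl (fun i _ => this i)]
      simp [hV]
    rw [Matrix.trace]
    calc ∑ s : {a // a ∈ S}, (Vᴴ * Cm * V).diag s
        = ∑ s : {a // a ∈ S}, hC.eigenvalues s.val := by
          apply Finset.sum_congr rfl
          intro s _
          rw [Matrix.diag_apply, hentry s s, hdiag, Matrix.diagonal_apply_eq]
      _ = ∑ i ∈ S, hC.eigenvalues i := by rw [← Finset.sum_coe_sort S]
  have hcard : Fintype.card {a // a ∈ S} = n := by rw [Fintype.card_coe, hScard]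
  have hlin : Matrix.trace (Vᴴ * Cm * V)
      = x * Matrix.trace (Vᴴ * A * V) + y * Matrix.trace (Vᴴ * B * V) := by
    rw [hCm, Matrix.mul_add, Matrix.add_mul, Matrix.trace_add]
    rw [Matrix.mul_smul, Matrix.smul_mul, Matrix.trace_smul, Matrix.mul_smul, Matrix.smul_mul,
      Matrix.trace_smul]
    simp [smul_eq_mul]
  have h1 : Matrix.trace (Vᴴ * A * V) ≤ sumNLargest A n :=
    trace_le_sumNLargest hA hn hcard V hVV
  have h2 : Matrix.trace (Vᴴ * B * V) ≤ sumNLargest B n :=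
    trace_le_sumNLargest hB hn hcard V hVV
  rw [sumNLargest_herm hC n, hSsum, ← htrC, hlin]
  exact add_le_add (mul_le_mul_of_nonneg_left h1 hx) (mul_le_mul_of_nonneg_left h2 hy)

lemma Lmat_isHermitian (m : ℕ) (u : Fin (m + 1) → ℝ) (a : ℕ → ℝ) :
    (Lmat m u a).IsHermitian := by
  rw [Matrix.IsHermitian]
  ext i j
  rw [Matrix.conjTranspose_apply]
  simp [Lmat, min_comm, max_comm, mul_comm]

lemma Lmat_congr (m : ℕ) (u : Fin (m + 1) → ℝ) (a b : ℕ → ℝ)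
    (hab : ∀ k, 1 ≤ k → k ≤ m → a k = b k) :
    Lmat m u a = Lmat m u b := by
  ext i j
  simp only [Lmat, Matrix.of_apply]
  congr 1
  apply Finset.prod_congr rfl
  intro k hk
  rw [Finset.mem_Ioc] at hk
  apply hab k (by omega)
  have hj : (j : ℕ) ≤ m := by omega
  have hi : (i : ℕ) ≤ m := by omega
  rcases le_total (i : ℕ) (j : ℕ) with hij | hij
  · rw [max_eq_right hij] at hk; omega
  · rw [max_eq_left hij] at hk; omega

lemma Lmat_affine (m : ℕ) (u : Fin (m + 1) → ℝ) (c : ℕ → ℝ) (k : ℕ)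
    (x y s t : ℝ) (hxy : x + y = 1) :
    Lmat m u (Function.update c k (x * s + y * t))
      = x • Lmat m u (Function.update c k s) + y • Lmat m u (Function.update c k t) := by
  ext i j
  simp only [Lmat, Matrix.of_apply, Matrix.add_apply, Matrix.smul_apply, smul_eq_mul]
  by_cases hk : k ∈ Finset.Ioc (min (i : ℕ) (j : ℕ)) (max (i : ℕ) (j : ℕ))
  · rw [Finset.prod_update_of_mem hk, Finset.prod_update_of_mem hk,
      Finset.prod_update_of_mem hk]
    ring
  · rw [Finset.prod_update_of_notMem hk, Finset.prod_update_of_notMem hk,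
      Finset.prod_update_of_notMem hk]
    have : x * (u i * u j * ∏ l ∈ Finset.Ioc (min (i:ℕ) (j:ℕ)) (max (i:ℕ) (j:ℕ)), c l)
        + y * (u i * u j * ∏ l ∈ Finset.Ioc (min (i:ℕ) (j:ℕ)) (max (i:ℕ) (j:ℕ)), c l)
        = (x + y) * (u i * u j * ∏ l ∈ Finset.Ioc (min (i:ℕ) (j:ℕ)) (max (i:ℕ) (j:ℕ)), c l) := by
      ring
    rw [this, hxy, one_mul]

lemma Lmat_neg_conj (m : ℕ) (u : Fin (m + 1) → ℝ) (c : ℕ → ℝ) (k : ℕ) (t : ℝ) :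
    (Matrix.diagonal fun i : Fin (m + 1) => if (i : ℕ) < k then (1 : ℝ) else -1)
        * Lmat m u (Function.update c k (-t))
        * (Matrix.diagonal fun i : Fin (m + 1) => if (i : ℕ) < k then (1 : ℝ) else -1)
      = Lmat m u (Function.update c k t) := by
  set d : Fin (m + 1) → ℝ := fun i => if (i : ℕ) < k then (1 : ℝ) else -1 with hd
  ext i j
  rw [Matrix.mul_diagonal, Matrix.diagonal_mul]
  simp only [Lmat, Matrix.of_apply]
  by_cases hk : k ∈ Finset.Ioc (min (i : ℕ) (j : ℕ)) (max (i : ℕ) (j : ℕ))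
  · rw [Finset.prod_update_of_mem hk, Finset.prod_update_of_mem hk]
    rw [Finset.mem_Ioc] at hk
    have hsign : d i * d j = -1 := by
      rcases le_total (i : ℕ) (j : ℕ) with hij | hij
      · rw [min_eq_left hij, max_eq_right hij] at hk
        rw [hd]
        simp only []
        rw [if_pos hk.1, if_neg (by omega)]
        norm_num
      · rw [min_eq_right hij, max_eq_left hij] at hk
        rw [hd]
        simp only []
        rw [if_neg (by omega), if_pos hk.1]
        norm_num
    linear_combination (-(u i * u j *
      (t * ∏ x ∈ Finset.Ioc (min (i : ℕ) (j : ℕ)) (max (i : ℕ) (j : ℕ)) \ {k}, c x))) * hsign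
  · rw [Finset.prod_update_of_notMem hk, Finset.prod_update_of_notMem hk]
    rw [Finset.mem_Ioc] at hk
    push_neg at hk
    have hsign : d i * d j = 1 := by
      by_cases hmin : min (i : ℕ) (j : ℕ) < k
      · have hmax := hk hmin
        have h1 : (i : ℕ) < k := by omega
        have h2 : (j : ℕ) < k := by omega
        rw [hd]; simp only []; rw [if_pos h1, if_pos h2]; norm_num
      · have h1 : ¬ ((i : ℕ) < k) := by omega
        have h2 : ¬ ((j : ℕ) < k) := by omega
        rw [hd]; simp only []; rw [if_neg h1, if_neg h2]; norm_num
    linear_combination (u i * u j *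
      ∏ x ∈ Finset.Ioc (min (i : ℕ) (j : ℕ)) (max (i : ℕ) (j : ℕ)), c x) * hsign

lemma sumNLargest_step (m : ℕ) (u : Fin (m + 1) → ℝ) (c : ℕ → ℝ) (k : ℕ)
    (s t : ℝ) (hs : 0 ≤ s) (hst : s ≤ t) (n : ℕ) (hn : n ≤ m + 1) :
    sumNLargest (Lmat m u (Function.update c k s)) n
      ≤ sumNLargest (Lmat m u (Function.update c k t)) n := by
  rcases eq_or_lt_of_le (hs.trans hst) with ht0 | ht
  · have hs0 : s = 0 := le_antisymm (by rw [← ht0] at hst; exact hst) hs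
    rw [hs0, ← ht0]
  · set x : ℝ := (t + s) / (2 * t) with hx
    set y : ℝ := (t - s) / (2 * t) with hy
    have hxy : x + y = 1 := by
      rw [hx, hy]
      field_simp
      ring
    have hx0 : 0 ≤ x := div_nonneg (by linarith) (by linarith)
    have hy0 : 0 ≤ y := div_nonneg (by linarith) (by linarith)
    have hcomb : x * t + y * (-t) = s := by
      rw [hx, hy]
      field_simp
      ring
    have heq : Function.update c k s = Function.update c k (x * t + y * (-t)) := by
      rw [hcomb]
    rw [heq, Lmat_affine m u c k x y t (-t) hxy]
    have hconj : sumNLargest (Lmat m u (Function.update c k (-t))) n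
        = sumNLargest (Lmat m u (Function.update c k t)) n := by
      rw [← Lmat_neg_conj m u c k t]
      refine (sumNLargest_conj (Lmat_isHermitian m u (Function.update c k (-t))) _ ?_ ?_ n).symm
      · ext i j
        rw [Matrix.diagonal_mul_diagonal]
        by_cases hij : i = j
        · subst hij
          simp only [Matrix.diagonal_apply_eq]
          by_cases hik : (i : ℕ) < k <;> simp [hik]
        · rw [Matrix.diagonal_apply_ne _ hij, Matrix.one_apply_ne hij]
      · rw [Matrix.IsHermitian]
        ext i j
        rw [Matrix.conjTranspose_apply, Matrix.diagonal_apply, Matrix.diagonal_apply]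
        by_cases hij : i = j
        · subst hij; simp
        · rw [if_neg (fun hc => hij hc.symm), if_neg hij]
          simp
    calc sumNLargest (x • Lmat m u (Function.update c k t)
            + y • Lmat m u (Function.update c k (-t))) n
        ≤ x * sumNLargest (Lmat m u (Function.update c k t)) n
            + y * sumNLargest (Lmat m u (Function.update c k (-t))) n :=
          sumNLargest_convex (Lmat_isHermitian m u _) (Lmat_isHermitian m u _) hx0 hy0 hn
      _ = (x + y) * sumNLargest (Lmat m u (Function.update c k t)) n := by
          rw [hconj]; ring
      _ = sumNLargest (Lmat m u (Function.update c k t)) n := by rw [hxy, one_mul]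

/-- **Monotonicity in the toy model**: for fixed nonnegative weights `u₀,…,u_m`, the sum
of the `n` largest eigenvalues of `L(a)` is monotone in `a ∈ [0,1]^m`: if
`0 ≤ a_k ≤ a'_k ≤ 1` for `k = 1,…,m`, then it increases when passing from `a` to `a'`. -/
theorem sumNLargest_monotone_toy
    (m : ℕ) (u : Fin (m + 1) → ℝ) (hu : ∀ i, 0 ≤ u i)
    (a a' : ℕ → ℝ)
    (h : ∀ k, 1 ≤ k → k ≤ m → 0 ≤ a k ∧ a k ≤ a' k ∧ a' k ≤ 1)
    (n : ℕ) (hn : n ≤ m + 1) :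
    sumNLargest (Lmat m u a) n ≤ sumNLargest (Lmat m u a') n := by
  classical
  set g : ℕ → (ℕ → ℝ) := fun i k => if k ≤ i then a' k else a k with hg
  have hgsucc : ∀ i, g (i + 1) = Function.update (g i) (i + 1) (a' (i + 1)) := by
    intro i
    funext k
    by_cases hk : k = i + 1
    · subst hk
      rw [Function.update_self, hg]
      simp
    · rw [Function.update_of_ne hk, hg]
      simp only []
      by_cases hki : k ≤ i
      · rw [if_pos hki, if_pos (by omega)]
      · rw [if_neg hki, if_neg (by omega)]
  have hgself : ∀ i, g i = Function.update (g i) (i + 1) (a (i + 1)) := by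
    intro i
    funext k
    by_cases hk : k = i + 1
    · subst hk
      rw [Function.update_self, hg]
      simp only []
      rw [if_neg (by omega)]
    · rw [Function.update_of_ne hk]
  have chain : ∀ i, i ≤ m → sumNLargest (Lmat m u a) n ≤ sumNLargest (Lmat m u (g i)) n := by
    intro i
    induction i with
    | zero =>
      intro _
      have : Lmat m u a = Lmat m u (g 0) := by
        apply Lmat_congr
        intro k hk1 _
        rw [hg]
        simp only []
        rw [if_neg (by omega)]
      rw [this]
    | succ i ih =>
      intro hi
      have h1 := ih (by omega)
      have h2 : sumNLargest (Lmat m u (g i)) n ≤ sumNLargest (Lmat m u (g (i + 1))) n := by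
        rw [hgsucc i]
        conv_lhs => rw [hgself i]
        have hk := h (i + 1) (by omega) hi
        exact sumNLargest_step m u (g i) (i + 1) (a (i + 1)) (a' (i + 1)) hk.1 hk.2.1 n hn
      exact h1.trans h2
  have hfinal : Lmat m u (g m) = Lmat m u a' := by
    apply Lmat_congr
    intro k hk1 hkm
    rw [hg]
    simp only []
    rw [if_pos hkm]
  have := chain m (le_refl m)
  rwa [hfinal] at this
end

section
/- Fix m ∈ ℕ and for a = (a₁,...,a_m) let L(a) be the real symmetric (m+1)×(m+1) matrix with entries L(a)_{ij} = ∏_{k=min(i,j)+1}^{max(i,j)} a_k (so all diagonal entries equal 1). If 0 < a_k < a'_k ≤ 1 for all k ∈ {1,...,m}, then the largest eigenvalue satisfies λ₁(L(a)) < λ₁(L(a')). -/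
open Finset
open Matrix

lemma sumNLargest_one_eq {N : ℕ} (hN : N ≠ 0) (A : Matrix (Fin N) (Fin N) ℝ)
    (hA : A.IsHermitian) :
    ∃ i, sumNLargest A 1 = hA.eigenvalues i ∧ ∀ j, hA.eigenvalues j ≤ hA.eigenvalues i := by
  rw [sumNLargest, dif_pos hA]
  set s := (Finset.univ.val.map hA.eigenvalues).sort (· ≤ ·) with hs
  have hlen : s.length = N := by simp [hs, Multiset.length_sort]
  have hne : s.reverse ≠ [] := by
    intro h0
    have := congrArg List.length h0
    simp [hlen] at this
    exact hN this
  obtain ⟨x, t, hxt⟩ := List.exists_cons_of_ne_nil hne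
  have hxmem : x ∈ s := by
    have : x ∈ s.reverse := by rw [hxt]; exact List.mem_cons_self
    simpa using this
  have hxms : x ∈ Finset.univ.val.map hA.eigenvalues := (Multiset.mem_sort _).1 hxmem
  obtain ⟨i, -, hi⟩ := Multiset.mem_map.1 hxms
  refine ⟨i, ?_, ?_⟩
  · rw [hxt]; simp [hi]
  · intro j
    have hjmem : hA.eigenvalues j ∈ s :=
      (Multiset.mem_sort _).2 (Multiset.mem_map_of_mem _ (Finset.mem_univ_val j))
    have : hA.eigenvalues j ∈ s.reverse := by simpa using hjmem
    rw [hxt] at this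
    rcases List.mem_cons.1 this with h1 | h1
    · rw [h1, hi]
    · have hrev : s.reverse.Pairwise (fun a b => b ≤ a) := by
        rw [List.pairwise_reverse]
        exact Multiset.pairwise_sort ..
      rw [hxt] at hrev
      have := List.rel_of_pairwise_cons hrev h1
      rw [hi]; exact this

lemma rayleigh_le {N : ℕ} (A : Matrix (Fin N) (Fin N) ℝ) (hA : A.IsHermitian)
    (μ : ℝ) (hμ : ∀ i, hA.eigenvalues i ≤ μ) (v : Fin N → ℝ) :
    v ⬝ᵥ (A *ᵥ v) ≤ μ * (v ⬝ᵥ v) := by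
  classical
  set U : Matrix (Fin N) (Fin N) ℝ := (hA.eigenvectorUnitary : Matrix (Fin N) (Fin N) ℝ) with hU
  have hstar : star U = Uᵀ := by
    rw [Matrix.star_eq_conjTranspose, Matrix.conjTranspose_eq_transpose_of_trivial]
  set w : Fin N → ℝ := Uᵀ *ᵥ v with hw
  have hUU : U * Uᵀ = 1 := by
    rw [← hstar]
    exact (Matrix.mem_unitaryGroup_iff).mp hA.eigenvectorUnitary.2
  have hofReal : (RCLike.ofReal ∘ hA.eigenvalues : Fin N → ℝ) = hA.eigenvalues := by
    funext i; simp [RCLike.ofReal]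
  have hspec : A = U * Matrix.diagonal hA.eigenvalues * Uᵀ := by
    have := hA.spectral_theorem
    rw [Unitary.conjStarAlgAut_apply, hstar, hofReal] at this
    exact this
  have hdot : ∀ y : Fin N → ℝ, v ⬝ᵥ (U *ᵥ y) = w ⬝ᵥ y := by
    intro y
    rw [Matrix.dotProduct_mulVec, hw, Matrix.mulVec_transpose]
  have key : v ⬝ᵥ (A *ᵥ v) = w ⬝ᵥ (Matrix.diagonal hA.eigenvalues *ᵥ w) := by
    conv_lhs => rw [hspec]
    rw [← Matrix.mulVec_mulVec, ← Matrix.mulVec_mulVec, hdot]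
  have keyn : v ⬝ᵥ v = w ⬝ᵥ w := by
    have : w ⬝ᵥ w = v ⬝ᵥ (U *ᵥ (Uᵀ *ᵥ v)) := (hdot _).symm
    rw [Matrix.mulVec_mulVec, hUU, Matrix.one_mulVec] at this
    exact this.symm
  rw [key, keyn]
  have hdiag : w ⬝ᵥ (Matrix.diagonal hA.eigenvalues *ᵥ w)
      = ∑ i, hA.eigenvalues i * (w i * w i) := by
    simp [dotProduct, Matrix.mulVec_diagonal]
    exact Finset.sum_congr rfl fun i _ => by ring
  rw [hdiag, dotProduct, Finset.mul_sum]
  exact Finset.sum_le_sum fun i _ =>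
    mul_le_mul_of_nonneg_right (hμ i) (mul_self_nonneg _)

lemma evec_facts {N : ℕ} (A : Matrix (Fin N) (Fin N) ℝ) (hA : A.IsHermitian) (i : Fin N) :
    (⇑(hA.eigenvectorBasis i) ⬝ᵥ ⇑(hA.eigenvectorBasis i)) = 1 := by
  have h1 := hA.eigenvectorBasis.orthonormal.1 i
  have h2 : (inner ℝ (hA.eigenvectorBasis i) (hA.eigenvectorBasis i) : ℝ) = 1 := by
    rw [real_inner_self_eq_norm_sq, h1]; norm_num
  rw [EuclideanSpace.inner_eq_star_dotProduct] at h2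
  simpa using h2

lemma Lmat_apply (m : ℕ) (a : ℕ → ℝ) (i j : Fin (m + 1)) :
    Lmat m (fun _ => 1) a i j
      = ∏ k ∈ Finset.Ioc (min (i : ℕ) (j : ℕ)) (max (i : ℕ) (j : ℕ)), a k := by
  simp [Lmat]

lemma Lmat_herm (m : ℕ) (a : ℕ → ℝ) : (Lmat m (fun _ => 1) a).IsHermitian := by
  ext i j
  simp only [Matrix.conjTranspose_apply, Lmat, Matrix.of_apply, star_trivial]
  rw [min_comm, max_comm]

lemma mem_Ioc_bounds (m : ℕ) (i j : Fin (m + 1)) (k : ℕ)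
    (hk : k ∈ Finset.Ioc (min (i : ℕ) (j : ℕ)) (max (i : ℕ) (j : ℕ))) :
    1 ≤ k ∧ k ≤ m := by
  rw [Finset.mem_Ioc] at hk
  refine ⟨Nat.one_le_iff_ne_zero.mpr ?_, le_trans hk.2 (max_le ?_ ?_)⟩
  · rintro rfl; exact Nat.not_lt_zero _ (lt_of_le_of_lt (Nat.zero_le _) hk.1)
  · exact Nat.lt_succ_iff.mp i.isLt
  · exact Nat.lt_succ_iff.mp j.isLt

lemma Lmat_pos (m : ℕ) (a : ℕ → ℝ) (ha : ∀ k, 1 ≤ k → k ≤ m → 0 < a k)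
    (i j : Fin (m + 1)) : 0 < Lmat m (fun _ => 1) a i j := by
  rw [Lmat_apply]
  exact Finset.prod_pos fun k hk => by
    obtain ⟨h1, h2⟩ := mem_Ioc_bounds m i j k hk; exact ha k h1 h2

lemma Lmat_diag (m : ℕ) (a : ℕ → ℝ) (i : Fin (m + 1)) :
    Lmat m (fun _ => 1) a i i = 1 := by
  rw [Lmat_apply]; simp

lemma Lmat_lt (m : ℕ) (a a' : ℕ → ℝ)
    (h : ∀ k, 1 ≤ k → k ≤ m → 0 < a k ∧ a k < a' k ∧ a' k ≤ 1)
    (i j : Fin (m + 1)) (hij : i ≠ j) :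
    Lmat m (fun _ => 1) a i j < Lmat m (fun _ => 1) a' i j := by
  rw [Lmat_apply, Lmat_apply]
  apply Finset.prod_lt_prod_of_nonempty
  · intro k hk
    obtain ⟨h1, h2⟩ := mem_Ioc_bounds m i j k hk; exact (h k h1 h2).1
  · intro k hk
    obtain ⟨h1, h2⟩ := mem_Ioc_bounds m i j k hk; exact (h k h1 h2).2.1
  · rw [Finset.nonempty_Ioc]
    rcases lt_or_gt_of_ne (fun hc : (i : ℕ) = (j : ℕ) => hij (Fin.ext hc)) with h' | h'
    · rw [min_eq_left h'.le, max_eq_right h'.le]; exact h'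
    · rw [min_eq_right h'.le, max_eq_left h'.le]; exact h'

lemma Lmat_le (m : ℕ) (a a' : ℕ → ℝ)
    (h : ∀ k, 1 ≤ k → k ≤ m → 0 < a k ∧ a k < a' k ∧ a' k ≤ 1)
    (i j : Fin (m + 1)) :
    Lmat m (fun _ => 1) a i j ≤ Lmat m (fun _ => 1) a' i j := by
  rcases eq_or_ne i j with rfl | hij
  · rw [Lmat_diag, Lmat_diag]
  · exact (Lmat_lt m a a' h i j hij).le

lemma dot_expand {N : ℕ} (A : Matrix (Fin N) (Fin N) ℝ) (v w : Fin N → ℝ) :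
    v ⬝ᵥ (A *ᵥ w) = ∑ i, ∑ j, v i * (A i j * w j) := by
  simp [dotProduct, Matrix.mulVec, Finset.mul_sum]

/-- **Strict monotonicity of the largest eigenvalue in the toy model** (`u ≡ 1`): if
`0 < a_k < a'_k ≤ 1` for `k = 1,…,m`, then `λ₁(L(a)) < λ₁(L(a'))`. -/
theorem largest_eigenvalue_strict_monotone_toy
    (m : ℕ) (hm : 1 ≤ m) (a a' : ℕ → ℝ)
    (h : ∀ k, 1 ≤ k → k ≤ m → 0 < a k ∧ a k < a' k ∧ a' k ≤ 1) :
    sumNLargest (Lmat m (fun _ => 1) a) 1 < sumNLargest (Lmat m (fun _ => 1) a') 1 := by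
  classical
  set A := Lmat m (fun _ => 1) a with hAdef
  set A' := Lmat m (fun _ => 1) a' with hA'def
  have hA := Lmat_herm m a
  have hA' := Lmat_herm m a'
  have hapos : ∀ k, 1 ≤ k → k ≤ m → 0 < a k := fun k h1 h2 => (h k h1 h2).1
  obtain ⟨i₀, hμ0, hmax⟩ := sumNLargest_one_eq (Nat.succ_ne_zero m) A hA
  obtain ⟨i₁, hμ1, hmax'⟩ := sumNLargest_one_eq (Nat.succ_ne_zero m) A' hA'
  set μ : ℝ := hA.eigenvalues i₀ with hμdef
  set μ' : ℝ := hA'.eigenvalues i₁ with hμ'def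
  set v : Fin (m + 1) → ℝ := ⇑(hA.eigenvectorBasis i₀) with hv
  have hv1 : v ⬝ᵥ v = 1 := evec_facts A hA i₀
  have hAv : A *ᵥ v = μ • v := hA.mulVec_eigenvectorBasis i₀
  have hμv : v ⬝ᵥ (A *ᵥ v) = μ := by
    rw [hAv, dotProduct_smul, smul_eq_mul, hv1, mul_one]
  -- μ > 1
  have h01 : (0 : Fin (m + 1)) ≠ (1 : Fin (m + 1)) := by
    intro hc
    have := congrArg Fin.val hc
    rw [Fin.val_zero, Fin.val_one'] at this
    have h2 : 1 % (m + 1) = 1 := Nat.mod_eq_of_lt (by omega)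
    omega
  have hμgt : 1 < μ := by
    set u : Fin (m + 1) → ℝ := Pi.single (0 : Fin (m + 1)) 1 + Pi.single 1 1 with hu
    have hud : u ⬝ᵥ (A *ᵥ u) = A 0 0 + A 0 1 + (A 1 0 + A 1 1) := by
      rw [hu, Matrix.mulVec_add, add_dotProduct]
      simp [dotProduct_add, single_dotProduct, Matrix.mulVec_single]
    have huu : u ⬝ᵥ u = 2 := by
      rw [hu]
      simp [add_dotProduct, dotProduct_add, single_dotProduct,
        dotProduct_single, Pi.single_apply, h01, h01.symm]
      norm_num
    have hray := rayleigh_le A hA μ hmax u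
    rw [hud, huu] at hray
    have hd0 : A 0 0 = 1 := Lmat_diag m a 0
    have hd1 : A 1 1 = 1 := Lmat_diag m a 1
    have hp1 : 0 < A 0 1 := Lmat_pos m a hapos 0 1
    have hp2 : 0 < A 1 0 := Lmat_pos m a hapos 1 0
    nlinarith
  -- v has two nonzero coordinates
  have hvne : ∃ p, v p ≠ 0 := by
    by_contra hh
    push_neg at hh
    rw [dotProduct] at hv1
    simp [hh] at hv1
  have htwo : ∃ p q, p ≠ q ∧ v p ≠ 0 ∧ v q ≠ 0 := by
    by_contra hcon
    push_neg at hcon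
    obtain ⟨p, hp⟩ := hvne
    have hzero : ∀ q, q ≠ p → v q = 0 := by
      intro q hq
      rcases eq_or_ne (v q) 0 with h0 | h0
      · exact h0
      · exact absurd hp (by simpa using hcon q p hq h0)
    have hvv : v ⬝ᵥ v = v p * v p := by
      rw [dotProduct]
      rw [Finset.sum_eq_single p]
      · intro b _ hb
        rw [hzero b hb, mul_zero]
      · intro hb; exact absurd (Finset.mem_univ p) hb
    have hAvv : v ⬝ᵥ (A *ᵥ v) = v p * v p := by
      rw [dot_expand]
      rw [Finset.sum_eq_single p]
      · rw [Finset.sum_eq_single p]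
        · have hdp : A p p = 1 := Lmat_diag m a p
          rw [hdp, one_mul]
        · intro b _ hb; rw [hzero b hb, mul_zero, mul_zero]
        · intro hb; exact absurd (Finset.mem_univ p) hb
      · intro b _ hb; rw [hzero b hb]; simp
      · intro hb; exact absurd (Finset.mem_univ p) hb
    rw [hμv] at hAvv
    rw [hvv] at hv1
    rw [hv1] at hAvv
    rw [hAvv] at hμgt
    exact lt_irrefl 1 hμgt
  obtain ⟨p, q, hpq, hvp, hvq⟩ := htwo
  set w : Fin (m + 1) → ℝ := fun i => |v i| with hwdef
  have hw1 : w ⬝ᵥ w = 1 := by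
    rw [dotProduct]
    rw [← hv1, dotProduct]
    exact Finset.sum_congr rfl fun i _ => abs_mul_abs_self (v i)
  have step1 : v ⬝ᵥ (A *ᵥ v) ≤ w ⬝ᵥ (A *ᵥ w) := by
    rw [dot_expand, dot_expand]
    refine Finset.sum_le_sum fun i _ => Finset.sum_le_sum fun j _ => ?_
    calc v i * (A i j * v j) ≤ |v i * (A i j * v j)| := le_abs_self _
      _ = w i * (A i j * w j) := by
          rw [abs_mul, abs_mul, abs_of_pos (Lmat_pos m a hapos i j)]
  have step2 : w ⬝ᵥ (A *ᵥ w) < w ⬝ᵥ (A' *ᵥ w) := by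
    rw [dot_expand, dot_expand]
    have hwn : ∀ i, 0 ≤ w i := fun i => abs_nonneg _
    have hterm : ∀ i j : Fin (m + 1), w i * (A i j * w j) ≤ w i * (A' i j * w j) := by
      intro i j
      have hle := Lmat_le m a a' h i j
      have h0 : 0 ≤ w i * w j := mul_nonneg (hwn i) (hwn j)
      nlinarith
    refine Finset.sum_lt_sum (fun i _ => Finset.sum_le_sum fun j _ => hterm i j)
      ⟨p, Finset.mem_univ p, ?_⟩
    refine Finset.sum_lt_sum (fun j _ => hterm p j) ⟨q, Finset.mem_univ q, ?_⟩
    have hwp : 0 < w p := abs_pos.mpr hvp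
    have hwq : 0 < w q := abs_pos.mpr hvq
    have hlt := Lmat_lt m a a' h p q hpq
    exact mul_lt_mul_of_pos_left (mul_lt_mul_of_pos_right hlt hwq) hwp
  have step3 : w ⬝ᵥ (A' *ᵥ w) ≤ μ' := by
    have := rayleigh_le A' hA' μ' hmax' w
    rwa [hw1, mul_one] at this
  rw [hμ0, hμ1]
  calc μ = v ⬝ᵥ (A *ᵥ v) := hμv.symm
    _ ≤ w ⬝ᵥ (A *ᵥ w) := step1
    _ < w ⬝ᵥ (A' *ᵥ w) := step2
    _ ≤ μ' := step3
end

section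
/- Let V = V₁ ⊕ V₂ be an orthogonal decomposition of a finite-dimensional complex inner product space. Let L₀ be a Hermitian operator leaving V₁ and V₂ invariant, and let T be a Hermitian operator that is block off-diagonal with respect to this decomposition (P₁ T P₁ = 0 and P₂ T P₂ = 0). Then for every n, the sum of the n largest eigenvalues of L₀ + aT is a nondecreasing function of a on [0,∞): for 0 ≤ a ≤ a', the sum of the n largest eigenvalues of L₀ + aT is ≤ the sum of the n largest eigenvalues of L₀ + a'T. -/
open Module
open scoped Classical

/-- The sum of the `n` largest eigenvalues (counted with multiplicity, listed in
decreasing order) of a Hermitian operator on a finite-dimensional complex inner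
product space; `0` if the operator is not Hermitian. -/
noncomputable def sumNLargestOp
    {V : Type*} [NormedAddCommGroup V] [InnerProductSpace ℂ V] [FiniteDimensional ℂ V]
    (A : V →ₗ[ℂ] V) (n : ℕ) : ℝ :=
  if hA : A.IsSymmetric then
    ((((Finset.univ.val.map (hA.eigenvalues rfl)).sort (· ≤ ·)).reverse.take n).sum)
  else 0

open scoped InnerProductSpace

section Aux

variable {V : Type*} [NormedAddCommGroup V] [InnerProductSpace ℂ V] [FiniteDimensional ℂ V]

private lemma ofFn_reverse {α : Type*} {m : ℕ} (g : Fin m → α) :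
    (List.ofFn g).reverse = List.ofFn (fun i => g i.rev) := by
  apply List.ext_getElem
  · simp
  · intro i h1 h2
    simp only [List.length_reverse, List.length_ofFn] at h1 h2
    rw [List.getElem_reverse, List.getElem_ofFn, List.getElem_ofFn]
    congr 1
    ext
    simp only [Fin.rev, List.length_ofFn]
    omega

private lemma exists_eig_rep (A : V →ₗ[ℂ] V) (hA : A.IsSymmetric) :
    ∃ (μ : Fin (finrank ℂ V) → ℝ) (e : OrthonormalBasis (Fin (finrank ℂ V)) ℂ V),
      Antitone μ ∧ (∀ i, A (e i) = (μ i : ℂ) • e i) ∧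
      ∀ n, sumNLargestOp A n
        = ∑ i ∈ Finset.univ.filter (fun i : Fin (finrank ℂ V) => (i : ℕ) < n), μ i := by
  set lam := hA.eigenvalues rfl with hlam
  set b := hA.eigenvectorBasis rfl with hb
  set π := Tuple.sort lam with hπ
  refine ⟨fun j => lam (π j.rev), b.reindex (Fin.revPerm.trans (π : Equiv.Perm _)).symm,
    ?_, ?_, ?_⟩
  · intro j k hjk
    exact Tuple.monotone_sort lam (Fin.rev_le_rev.mpr hjk)
  · intro i
    rw [OrthonormalBasis.reindex_apply]
    simp only [Equiv.symm_symm, Equiv.trans_apply, Fin.revPerm_apply]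
    exact hA.apply_eigenvectorBasis rfl _
  · intro n
    have hsort : (Finset.univ.val.map lam).sort (· ≤ ·) = List.ofFn (fun i => lam (π i)) := by
      refine List.Perm.eq_of_pairwise' (Multiset.pairwise_sort _ _)
        (Tuple.monotone_sort lam).sortedLE_ofFn.pairwise ?_
      · rw [← Multiset.coe_eq_coe, Multiset.sort_eq, List.ofFn_eq_map]
        have huniv : (Finset.univ : Finset (Fin (finrank ℂ V))).val = (List.finRange (finrank ℂ V) : Multiset (Fin (finrank ℂ V))) := by
          rw [Fin.univ_def]
        rw [huniv]
        rw [Multiset.map_coe]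
        rw [show ((fun i => lam (π i)) : Fin (finrank ℂ V) → ℝ) = lam ∘ π from rfl]
        rw [← List.map_map]
        have : (List.map (π : Fin (finrank ℂ V) → Fin (finrank ℂ V)) (List.finRange _) : Multiset (Fin (finrank ℂ V)))
            = ↑(List.finRange (finrank ℂ V)) := by
          have := Finset.map_univ_equiv (π : Fin (finrank ℂ V) ≃ Fin (finrank ℂ V))
          have h2 := congrArg Finset.val this
          rw [Finset.map_val, Fin.univ_def] at h2
          exact h2
        rw [← Multiset.map_coe, ← Multiset.map_coe, this]
    rw [sumNLargestOp, dif_pos hA, ← hlam, hsort, ofFn_reverse, List.sum_take_ofFn]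

private lemma maj_aux {N n : ℕ} (hn : n ≤ N) (μ t : Fin N → ℝ) (hμ : Antitone μ)
    (ht0 : ∀ i, 0 ≤ t i) (ht1 : ∀ i, t i ≤ 1) (hts : ∑ i, t i = n) :
    ∑ i, μ i * t i ≤ ∑ i ∈ Finset.univ.filter (fun i : Fin N => (i : ℕ) < n), μ i := by
  have hcard : (Finset.univ.filter (fun i : Fin N => (i : ℕ) < n)).card = n := by
    have hlt : ∀ m ∈ Finset.range n, m < N := fun m hm =>
      lt_of_lt_of_le (Finset.mem_range.mp hm) hn
    have : Finset.univ.filter (fun i : Fin N => (i : ℕ) < n) = (Finset.range n).attachFin hlt := by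
      ext i
      simp [Finset.mem_attachFin]
    rw [this, Finset.card_attachFin, Finset.card_range]
  rcases Nat.eq_zero_or_pos n with h0 | h0
  · subst h0
    have hz : ∀ i ∈ Finset.univ, t i = 0 := by
      rw [← Finset.sum_eq_zero_iff_of_nonneg (fun i _ => ht0 i)]
      simpa using hts
    have : ∀ i ∈ (Finset.univ : Finset (Fin N)), μ i * t i = 0 := by
      intro i hi; rw [hz i hi, mul_zero]
    rw [Finset.sum_congr rfl this]
    simp
  · have hn1 : n - 1 < N := by omega
    set c := μ ⟨n - 1, hn1⟩ with hc
    have key : ∀ i : Fin N, μ i * t i ≤ (if (i : ℕ) < n then μ i - c else 0) + c * t i := by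
      intro i
      by_cases h : (i : ℕ) < n
      · rw [if_pos h]
        have h1 : c ≤ μ i := hμ (by rw [Fin.le_def]; simp; omega)
        nlinarith [ht1 i]
      · rw [if_neg h]
        have h1 : μ i ≤ c := hμ (by rw [Fin.le_def]; simp; omega)
        nlinarith [ht0 i]
    calc ∑ i : Fin N, μ i * t i
        ≤ ∑ i : Fin N, ((if (i : ℕ) < n then μ i - c else 0) + c * t i) :=
          Finset.sum_le_sum fun i _ => key i
      _ = (∑ i ∈ Finset.univ.filter (fun i : Fin N => (i : ℕ) < n), (μ i - c))
          + c * ∑ i : Fin N, t i := by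
          rw [Finset.sum_add_distrib, ← Finset.mul_sum]
          congr 1
          exact (Finset.sum_filter (fun i : Fin N => (i : ℕ) < n) (fun i => μ i - c)).symm
      _ = ∑ i ∈ Finset.univ.filter (fun i : Fin N => (i : ℕ) < n), μ i := by
          rw [Finset.sum_sub_distrib, Finset.sum_const, hcard, hts]
          ring

private lemma re_inner_apply_eq (A : V →ₗ[ℂ] V) (hA : A.IsSymmetric)
    {μ : Fin (finrank ℂ V) → ℝ} (e : OrthonormalBasis (Fin (finrank ℂ V)) ℂ V)
    (he : ∀ i, A (e i) = (μ i : ℂ) • e i) (x : V) :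
    (⟪A x, x⟫_ℂ).re = ∑ i, μ i * ‖⟪e i, x⟫_ℂ‖ ^ 2 := by
  have h1 : ⟪A x, x⟫_ℂ = ∑ i, ⟪A x, e i⟫_ℂ * ⟪e i, x⟫_ℂ := (e.sum_inner_mul_inner _ _).symm
  have h2 : ∀ i : Fin (finrank ℂ V),
      ⟪A x, e i⟫_ℂ * ⟪e i, x⟫_ℂ = ((μ i * ‖⟪e i, x⟫_ℂ‖ ^ 2 : ℝ) : ℂ) := by
    intro i
    rw [hA x (e i), he i, inner_smul_right]
    calc (μ i : ℂ) * ⟪x, e i⟫_ℂ * ⟪e i, x⟫_ℂ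
        = (μ i : ℂ) * ((starRingEnd ℂ) ⟪e i, x⟫_ℂ * ⟪e i, x⟫_ℂ) := by
          rw [inner_conj_symm]; ring
      _ = ((μ i * ‖⟪e i, x⟫_ℂ‖ ^ 2 : ℝ) : ℂ) := by rw [Complex.conj_mul']; push_cast; ring
  rw [h1, Finset.sum_congr rfl fun i _ => h2 i, ← Complex.ofReal_sum, Complex.ofReal_re]

private lemma sum_inner_sq (e : OrthonormalBasis (Fin (finrank ℂ V)) ℂ V) (x : V) :
    ∑ i, ‖⟪e i, x⟫_ℂ‖ ^ 2 = ‖x‖ ^ 2 := by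
  have h1 : ⟪x, x⟫_ℂ = ∑ i, ⟪x, e i⟫_ℂ * ⟪e i, x⟫_ℂ := (e.sum_inner_mul_inner x x).symm
  have h2 : ∀ i : Fin (finrank ℂ V),
      ⟪x, e i⟫_ℂ * ⟪e i, x⟫_ℂ = ((‖⟪e i, x⟫_ℂ‖ ^ 2 : ℝ) : ℂ) := by
    intro i
    calc ⟪x, e i⟫_ℂ * ⟪e i, x⟫_ℂ
        = (starRingEnd ℂ) ⟪e i, x⟫_ℂ * ⟪e i, x⟫_ℂ := by rw [inner_conj_symm]
      _ = ((‖⟪e i, x⟫_ℂ‖ ^ 2 : ℝ) : ℂ) := by rw [Complex.conj_mul']; push_cast; ring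
  rw [inner_self_eq_norm_sq_to_K, Finset.sum_congr rfl fun i _ => h2 i,
    ← Complex.ofReal_sum] at h1
  norm_cast at h1
  exact Complex.ofReal_injective h1.symm

private lemma kyfan_le (A : V →ₗ[ℂ] V) (hA : A.IsSymmetric) {n : ℕ}
    (f : Fin n → V) (hf : Orthonormal ℂ f) :
    ∑ j, (⟪A (f j), f j⟫_ℂ).re ≤ sumNLargestOp A n := by
  obtain ⟨μ, e, hμ, he, hsum⟩ := exists_eig_rep A hA
  rw [hsum n]
  have hn : n ≤ finrank ℂ V := by
    simpa using hf.linearIndependent.fintype_card_le_finrank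
  set t : Fin (finrank ℂ V) → ℝ := fun i => ∑ j, ‖⟪e i, f j⟫_ℂ‖ ^ 2 with hts
  have h1 : ∑ j, (⟪A (f j), f j⟫_ℂ).re = ∑ i, μ i * t i := by
    have : ∀ j, (⟪A (f j), f j⟫_ℂ).re = ∑ i, μ i * ‖⟪e i, f j⟫_ℂ‖ ^ 2 :=
      fun j => re_inner_apply_eq A hA e he (f j)
    rw [Finset.sum_congr rfl fun j _ => this j, Finset.sum_comm]
    simp [hts, Finset.mul_sum]
  rw [h1]
  apply maj_aux hn μ t hμ
  · intro i; positivity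
  · intro i
    have hb := hf.sum_inner_products_le (𝕜 := ℂ) (e i) (s := Finset.univ)
    have : t i = ∑ j, ‖⟪f j, e i⟫_ℂ‖ ^ 2 :=
      Finset.sum_congr rfl fun j _ => by rw [norm_inner_symm]
    rw [this]
    calc ∑ j, ‖⟪f j, e i⟫_ℂ‖ ^ 2 ≤ ‖e i‖ ^ 2 := hb
      _ = 1 := by rw [e.orthonormal.1 i]; norm_num
  · rw [Finset.sum_comm]
    have : ∀ j, ∑ i, ‖⟪e i, f j⟫_ℂ‖ ^ 2 = 1 := by
      intro j
      rw [sum_inner_sq e (f j), hf.1 j]; norm_num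
    rw [Finset.sum_congr rfl fun j _ => this j]
    simp

private lemma kyfan_exists (A : V →ₗ[ℂ] V) (hA : A.IsSymmetric) (n : ℕ) :
    ∃ f : Fin (min n (finrank ℂ V)) → V, Orthonormal ℂ f ∧
      ∑ j, (⟪A (f j), f j⟫_ℂ).re = sumNLargestOp A n := by
  obtain ⟨μ, e, hμ, he, hsum⟩ := exists_eig_rep A hA
  refine ⟨fun j => e (Fin.castLE (min_le_right n _) j),
    e.orthonormal.comp _ (Fin.castLE_injective _), ?_⟩
  rw [hsum n]
  have hmem : ∀ i : Fin (finrank ℂ V),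
      (⟪A (e i), e i⟫_ℂ).re = μ i := by
    intro i
    rw [he i, inner_smul_left, Complex.conj_ofReal, inner_self_eq_norm_sq_to_K,
      e.orthonormal.1 i]
    norm_num
  rw [Finset.sum_congr rfl fun j _ => hmem (Fin.castLE (min_le_right n _) j)]
  have hset : Finset.univ.filter (fun i : Fin (finrank ℂ V) => (i : ℕ) < n)
      = Finset.map (Fin.castLEEmb (min_le_right n (finrank ℂ V))) Finset.univ := by
    ext i
    simp only [Finset.mem_filter, Finset.mem_univ, true_and, Finset.mem_map,
      Fin.castLEEmb_apply]
    constructor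
    · intro h
      exact ⟨⟨(i : ℕ), lt_min h i.isLt⟩, by ext; rfl⟩
    · rintro ⟨j, rfl⟩
      exact lt_of_lt_of_le j.isLt (min_le_left _ _)
  rw [hset, Finset.sum_map]
  rfl

private lemma sumN_min (A : V →ₗ[ℂ] V) (hA : A.IsSymmetric) (n : ℕ) :
    sumNLargestOp A n = sumNLargestOp A (min n (finrank ℂ V)) := by
  obtain ⟨μ, e, hμ, he, hsum⟩ := exists_eig_rep A hA
  rw [hsum, hsum]
  apply Finset.sum_congr _ fun _ _ => rfl
  ext i
  simp only [Finset.mem_filter, Finset.mem_univ, true_and, lt_min_iff]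
  exact ⟨fun h => ⟨h, i.isLt⟩, fun h => h.1⟩

private lemma kyfan_subadd (A B : V →ₗ[ℂ] V) (hA : A.IsSymmetric) (hB : B.IsSymmetric) (n : ℕ) :
    sumNLargestOp (A + B) n ≤ sumNLargestOp A n + sumNLargestOp B n := by
  obtain ⟨f, hf, hfs⟩ := kyfan_exists (A + B) (hA.add hB) n
  rw [← hfs]
  have hsplit : ∀ j, (⟪(A + B) (f j), f j⟫_ℂ).re
      = (⟪A (f j), f j⟫_ℂ).re + (⟪B (f j), f j⟫_ℂ).re := by
    intro j
    rw [LinearMap.add_apply, inner_add_left, Complex.add_re]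
  rw [Finset.sum_congr rfl fun j _ => hsplit j, Finset.sum_add_distrib]
  have h1 := kyfan_le A hA f hf
  have h2 := kyfan_le B hB f hf
  rw [← sumN_min A hA n] at h1
  rw [← sumN_min B hB n] at h2
  exact add_le_add h1 h2

private lemma isSymmetric_real_smul (r : ℝ) (A : V →ₗ[ℂ] V) (hA : A.IsSymmetric) :
    ((r : ℂ) • A).IsSymmetric := by
  intro x y
  rw [LinearMap.smul_apply, LinearMap.smul_apply, inner_smul_left, inner_smul_right,
    Complex.conj_ofReal, hA x y]

private lemma kyfan_smul (A : V →ₗ[ℂ] V) (hA : A.IsSymmetric) (r : ℝ) (hr : 0 ≤ r) (n : ℕ) :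
    sumNLargestOp ((r : ℂ) • A) n = r * sumNLargestOp A n := by
  have hrA := isSymmetric_real_smul r A hA
  have hterm : ∀ x : V, (⟪((r : ℂ) • A) x, x⟫_ℂ).re = r * (⟪A x, x⟫_ℂ).re := by
    intro x
    rw [LinearMap.smul_apply, inner_smul_left, Complex.conj_ofReal]
    simp [Complex.re_ofReal_mul]
  apply le_antisymm
  · obtain ⟨f, hf, hfs⟩ := kyfan_exists _ hrA n
    rw [← hfs, Finset.sum_congr rfl fun j _ => hterm (f j), ← Finset.mul_sum]
    have h1 := kyfan_le A hA f hf
    rw [← sumN_min A hA n] at h1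
    exact mul_le_mul_of_nonneg_left h1 hr
  · obtain ⟨f, hf, hfs⟩ := kyfan_exists A hA n
    rw [← hfs, Finset.mul_sum, ← Finset.sum_congr rfl fun j _ => hterm (f j)]
    have h1 := kyfan_le _ hrA f hf
    rwa [← sumN_min _ hrA n] at h1

private lemma kyfan_conj_le (A U : V →ₗ[ℂ] V) (hA : A.IsSymmetric) (hU : U.IsSymmetric)
    (hU2 : ∀ x, U (U x) = x) (n : ℕ) :
    sumNLargestOp (U ∘ₗ A ∘ₗ U) n ≤ sumNLargestOp A n := by
  have hUU : ∀ x y : V, ⟪U x, U y⟫_ℂ = ⟪x, y⟫_ℂ := by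
    intro x y
    rw [hU x (U y), hU2 y]
  have hB : (U ∘ₗ A ∘ₗ U).IsSymmetric := by
    intro x y
    simp only [LinearMap.comp_apply]
    rw [hU (A (U x)) y, hA (U x) (U y), hU x (A (U y))]
  obtain ⟨f, hf, hfs⟩ := kyfan_exists _ hB n
  rw [← hfs]
  have hg : Orthonormal ℂ (fun j => U (f j)) := by
    rw [orthonormal_iff_ite] at hf ⊢
    intro i j
    rw [hUU]
    exact hf i j
  have heq : ∀ j, (⟪(U ∘ₗ A ∘ₗ U) (f j), f j⟫_ℂ).re = (⟪A (U (f j)), U (f j)⟫_ℂ).re := by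
    intro j
    simp only [LinearMap.comp_apply]
    rw [hU (A (U (f j))) (f j)]
  rw [Finset.sum_congr rfl fun j _ => heq j]
  have h1 := kyfan_le A hA _ hg
  rwa [← sumN_min A hA n] at h1

private lemma kyfan_conj_eq (A U : V →ₗ[ℂ] V) (hA : A.IsSymmetric) (hU : U.IsSymmetric)
    (hU2 : ∀ x, U (U x) = x) (n : ℕ) :
    sumNLargestOp (U ∘ₗ A ∘ₗ U) n = sumNLargestOp A n := by
  have hB : (U ∘ₗ A ∘ₗ U).IsSymmetric := by
    intro x y
    simp only [LinearMap.comp_apply]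
    rw [hU (A (U x)) y, hA (U x) (U y), hU x (A (U y))]
  refine le_antisymm (kyfan_conj_le A U hA hU hU2 n) ?_
  have hAeq : A = U ∘ₗ (U ∘ₗ A ∘ₗ U) ∘ₗ U := by
    apply LinearMap.ext
    intro x
    simp only [LinearMap.comp_apply, hU2]
  conv_lhs => rw [hAeq]
  exact kyfan_conj_le _ U hB hU hU2 n

end Aux

/-- **Monotonicity of eigenvalue partial sums for block off-diagonal perturbations**:
let `V = V₁ ⊕ V₂` be an orthogonal decomposition of a finite-dimensional complex inner
product space, `L₀` Hermitian leaving `V₁`, `V₂` invariant, and `T` Hermitian, block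
off-diagonal (`T(V₁) ⊆ V₂ = V₁ᗮ` and `T(V₂) ⊆ V₁`).  Then for every `n`, the sum of
the `n` largest eigenvalues of `L₀ + a T` is nondecreasing in `a ∈ [0,∞)`. -/
theorem sumNLargestOp_monotone_offdiagonal
    {V : Type*} [NormedAddCommGroup V] [InnerProductSpace ℂ V] [FiniteDimensional ℂ V]
    (V₁ V₂ : Submodule ℂ V) (hV : V₂ = V₁ᗮ)
    (L₀ T : V →ₗ[ℂ] V) (hL₀ : L₀.IsSymmetric) (hT : T.IsSymmetric)
    (hinv₁ : ∀ x ∈ V₁, L₀ x ∈ V₁) (hinv₂ : ∀ x ∈ V₂, L₀ x ∈ V₂)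
    (hT₁ : ∀ x ∈ V₁, T x ∈ V₂) (hT₂ : ∀ x ∈ V₂, T x ∈ V₁)
    (n : ℕ) (a a' : ℝ) (ha : 0 ≤ a) (haa' : a ≤ a') :
    sumNLargestOp (L₀ + (a : ℂ) • T) n ≤ sumNLargestOp (L₀ + (a' : ℂ) • T) n := by
  subst hV
  -- the sign involution U = 2 P₁ - 1
  set P : V →ₗ[ℂ] V := V₁.subtype ∘ₗ V₁.orthogonalProjectionOnto.toLinearMap with hP
  set U : V →ₗ[ℂ] V := P + P - LinearMap.id with hU
  have hPv : ∀ v ∈ V₁, P v = v := by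
    intro v hv
    have := Submodule.orthogonalProjectionOnto_mem_subspace_eq_self (K := V₁) ⟨v, hv⟩
    simp only [hP, LinearMap.comp_apply, ContinuousLinearMap.coe_coe, Submodule.coe_subtype]
    rw [this]
  have hPw : ∀ w ∈ V₁ᗮ, P w = 0 := by
    intro w hw
    simp only [hP, LinearMap.comp_apply, ContinuousLinearMap.coe_coe, Submodule.coe_subtype]
    rw [Submodule.orthogonalProjectionOnto_apply_of_mem_orthogonal hw]
    rfl
  have hUv : ∀ v ∈ V₁, U v = v := by
    intro v hv
    simp only [hU, LinearMap.sub_apply, LinearMap.add_apply, LinearMap.id_apply, hPv v hv]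
    abel
  have hUw : ∀ w ∈ V₁ᗮ, U w = -w := by
    intro w hw
    simp only [hU, LinearMap.sub_apply, LinearMap.add_apply, LinearMap.id_apply, hPw w hw]
    abel
  have hUsym : U.IsSymmetric := by
    have hPsym : ∀ x y : V, ⟪P x, y⟫_ℂ = ⟪x, P y⟫_ℂ := by
      intro x y
      exact Submodule.inner_starProjection_left_eq_right V₁ x y
    intro x y
    simp only [hU, LinearMap.sub_apply, LinearMap.add_apply, LinearMap.id_apply,
      inner_sub_left, inner_add_left, inner_sub_right, inner_add_right, hPsym]
  have hU2 : ∀ x, U (U x) = x := by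
    intro x
    obtain ⟨v, hv, w, hw, rfl⟩ := V₁.exists_add_mem_mem_orthogonal x
    rw [map_add, hUv v hv, hUw w hw, map_add, hUv v hv, map_neg, hUw w hw, neg_neg]
  -- conjugation flips the sign of `T`
  have hconj : ∀ r : ℝ, U ∘ₗ (L₀ + (r : ℂ) • T) ∘ₗ U = L₀ + ((-r : ℝ) : ℂ) • T := by
    intro r
    apply LinearMap.ext
    intro x
    obtain ⟨v, hv, w, hw, rfl⟩ := V₁.exists_add_mem_mem_orthogonal x
    have hx1 : U (v + w) = v - w := by
      rw [map_add, hUv v hv, hUw w hw, sub_eq_add_neg]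
    simp only [LinearMap.comp_apply, hx1, LinearMap.add_apply, LinearMap.smul_apply]
    rw [map_sub L₀, map_sub T]
    have e1 : U (L₀ v) = L₀ v := hUv _ (hinv₁ v hv)
    have e2 : U (L₀ w) = -(L₀ w) := hUw _ (hinv₂ w hw)
    have e3 : U (T v) = -(T v) := hUw _ (hT₁ v hv)
    have e4 : U (T w) = T w := hUv _ (hT₂ w hw)
    rw [map_add, map_smul, map_sub, map_sub, e1, e2, e3, e4]
    rw [map_add L₀, map_add T]
    push_cast
    rw [neg_smul]
    module
  have hsymm : ∀ r : ℝ, (L₀ + (r : ℂ) • T).IsSymmetric := fun r =>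
    hL₀.add (isSymmetric_real_smul r T hT)
  have heven : ∀ r : ℝ, ∀ m : ℕ,
      sumNLargestOp (L₀ + ((-r : ℝ) : ℂ) • T) m = sumNLargestOp (L₀ + (r : ℂ) • T) m := by
    intro r m
    rw [← hconj r]
    exact kyfan_conj_eq _ U (hsymm r) hUsym hU2 m
  -- convexity argument
  rcases eq_or_lt_of_le (ha.trans haa') with h0 | h0
  · have ha0 : a = 0 := le_antisymm (haa'.trans h0.symm.le) ha
    rw [ha0, ← h0]
  · set t := (a' + a) / (2 * a') with htdef
    set s := (a' - a) / (2 * a') with hsdef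
    have ht : 0 ≤ t := div_nonneg (by linarith) (by linarith)
    have hs : 0 ≤ s := div_nonneg (by linarith) (by linarith)
    have hts : t + s = 1 := by
      rw [htdef, hsdef]
      field_simp [h0.ne']
      ring
    have h2r : t * a' + s * (-a') = a := by
      rw [htdef, hsdef]
      field_simp [h0.ne']
      ring
    have hdecomp : L₀ + (a : ℂ) • T
        = (t : ℂ) • (L₀ + (a' : ℂ) • T) + (s : ℂ) • (L₀ + ((-a' : ℝ) : ℂ) • T) := by
      rw [smul_add, smul_add, smul_smul, smul_smul, add_add_add_comm, ← add_smul, ← add_smul]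
      have h1 : (t : ℂ) + (s : ℂ) = 1 := by
        rw [← Complex.ofReal_add, hts, Complex.ofReal_one]
      have h2 : (t : ℂ) * (a' : ℂ) + (s : ℂ) * ((-a' : ℝ) : ℂ) = (a : ℂ) := by
        rw [← Complex.ofReal_mul, ← Complex.ofReal_mul, ← Complex.ofReal_add, h2r]
      rw [h1, h2, one_smul]
    have hX := hsymm a'
    have hY : (L₀ + ((-a' : ℝ) : ℂ) • T).IsSymmetric := hsymm (-a')
    rw [hdecomp]
    calc sumNLargestOp ((t : ℂ) • (L₀ + (a' : ℂ) • T)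
            + (s : ℂ) • (L₀ + ((-a' : ℝ) : ℂ) • T)) n
        ≤ sumNLargestOp ((t : ℂ) • (L₀ + (a' : ℂ) • T)) n
          + sumNLargestOp ((s : ℂ) • (L₀ + ((-a' : ℝ) : ℂ) • T)) n :=
          kyfan_subadd _ _ (isSymmetric_real_smul t _ hX) (isSymmetric_real_smul s _ hY) n
      _ = t * sumNLargestOp (L₀ + (a' : ℂ) • T) n
          + s * sumNLargestOp (L₀ + ((-a' : ℝ) : ℂ) • T) n := by
          rw [kyfan_smul _ hX t ht n, kyfan_smul _ hY s hs n]
      _ = (t + s) * sumNLargestOp (L₀ + (a' : ℂ) • T) n := by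
          rw [heven a' n]
          ring
      _ = sumNLargestOp (L₀ + (a' : ℂ) • T) n := by
          rw [hts, one_mul]
end
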